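/- arXiv:2503.23203 — 9 statements merged into one kernel-verified Lean document; each statement's English description precedes it below -/
import Mathlib

section
/- For every f ∈ 𝒞_c(G) and every g ∈ G one has |f(g)| ≤ sup_{x ∈ X} ‖π_x(f)‖; that is, the uniform norm on 𝒞_c(G) is dominated by the reduced C*-norm. -/
/-! Basic framework: (possibly non-Hausdorff) topological groupoids, open bisections,
the convolution algebra `𝒞_c(G)`. -/

/-- The data of a topological groupoid on a topological space `G`:
unit space `X ⊆ G`, range and source maps `r, s : G → G` (with values in `X`),
inversion and a (partial, defined on composable pairs) multiplication, all continuous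
(multiplication on the set of composable pairs), satisfying the groupoid axioms. -/
structure GroupoidData (G : Type) [TopologicalSpace G] : Type where
  X : Set G
  r : G → G
  s : G → G
  inv : G → G
  mul : G → G → G
  r_mem : ∀ g, r g ∈ X
  s_mem : ∀ g, s g ∈ X
  r_unit : ∀ x ∈ X, r x = x
  s_unit : ∀ x ∈ X, s x = x
  continuous_r : Continuous r
  continuous_s : Continuous s
  continuous_inv : Continuous inv
  continuousOn_mul : ContinuousOn (fun p : G × G => mul p.1 p.2) {p : G × G | s p.1 = r p.2}
  r_inv : ∀ g, r (inv g) = s g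
  s_inv : ∀ g, s (inv g) = r g
  inv_inv : ∀ g, inv (inv g) = g
  r_mul : ∀ g h, s g = r h → r (mul g h) = r g
  s_mul : ∀ g h, s g = r h → s (mul g h) = s h
  mul_assoc : ∀ g h k, s g = r h → s h = r k → mul (mul g h) k = mul g (mul h k)
  mul_inv : ∀ g, mul g (inv g) = r g
  inv_mul : ∀ g, mul (inv g) g = s g
  mul_unit : ∀ g, mul g (s g) = g
  unit_mul : ∀ g, mul (r g) g = g

variable {G : Type} [TopologicalSpace G]

/-- An open bisection: an open set on which both `r` and `s` are injective and restrict to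
open maps (hence homeomorphisms onto open subsets of the unit space). -/
def GroupoidData.IsOpenBisection (D : GroupoidData G) (U : Set G) : Prop :=
  IsOpen U ∧ Set.InjOn D.r U ∧ Set.InjOn D.s U ∧
    (∀ V ⊆ U, IsOpen V → IsOpen (D.r '' V)) ∧ (∀ V ⊆ U, IsOpen V → IsOpen (D.s '' V))

/-- The groupoid is étale: it is covered by open bisections. -/
def GroupoidData.IsEtale (D : GroupoidData G) : Prop :=
  ∀ g : G, ∃ U : Set G, D.IsOpenBisection U ∧ g ∈ U

/-- `f : G → ℂ` is (the extension by zero of) a continuous compactly supported function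
on the open set `U`. -/
def MemCc (U : Set G) (f : G → ℂ) : Prop :=
  ContinuousOn f U ∧ (∀ g ∉ U, f g = 0) ∧
    ∃ K : Set G, IsCompact K ∧ K ⊆ U ∧ ∀ g, f g ≠ 0 → g ∈ K

/-- The convolution algebra `𝒞_c(G)`, as a linear subspace of functions `G → ℂ`:
the span of the `C_c(U)` over all open bisections `U`. -/
noncomputable def GroupoidData.CcSpan (D : GroupoidData G) : Submodule ℂ (G → ℂ) :=
  Submodule.span ℂ {f : G → ℂ | ∃ U : Set G, D.IsOpenBisection U ∧ MemCc U f}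

/-- Convolution of functions on the groupoid:
`(f₁ * f₂)(g) = ∑_{g₁ g₂ = g} f₁(g₁) f₂(g₂)` (sum over composable pairs with product `g`). -/
noncomputable def GroupoidData.convolve (D : GroupoidData G) (f₁ f₂ : G → ℂ) (g : G) : ℂ :=
  ∑ᶠ p ∈ {p : G × G | D.s p.1 = D.r p.2 ∧ D.mul p.1 p.2 = g}, f₁ p.1 * f₂ p.2


/-- Auxiliary: on an element of `𝒞_c(G)`, each source fibre meets the support in a
finite set. -/
theorem fibre_finite (D : GroupoidData G) (f : G → ℂ) (hf : f ∈ D.CcSpan) (y : G) :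
    {h : G | D.s h = y ∧ f h ≠ 0}.Finite := by
  induction hf using Submodule.span_induction with
  | mem f hfU =>
    obtain ⟨U, hU, hcc⟩ := hfU
    have hsub : {h : G | D.s h = y ∧ f h ≠ 0} ⊆ {h : G | h ∈ U ∧ D.s h = y} := by
      rintro h ⟨h1, h2⟩
      refine ⟨?_, h1⟩
      by_contra hnot
      exact h2 (hcc.2.1 h hnot)
    refine Set.Finite.subset ?_ hsub
    apply Set.Subsingleton.finite
    rintro a ⟨haU, hay⟩ b ⟨hbU, hby⟩
    exact hU.2.2.1 haU hbU (hay.trans hby.symm)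
  | zero => simp
  | add f₁ f₂ _ _ h1 h2 =>
    refine Set.Finite.subset (h1.union h2) ?_
    rintro h ⟨hy, hne⟩
    by_cases hf1 : f₁ h = 0
    · right
      refine ⟨hy, fun h0 => hne ?_⟩
      simp [Pi.add_apply, hf1, h0]
    · left; exact ⟨hy, hf1⟩
  | smul a f₁ _ h1 =>
    refine Set.Finite.subset h1 ?_
    rintro h ⟨hy, hne⟩
    refine ⟨hy, fun h0 => hne ?_⟩
    simp [Pi.smul_apply, h0]

/-- For every `f ∈ 𝒞_c(G)` and `g ∈ G`, `|f(g)| ≤ sup_{x ∈ X} ‖π_x(f)‖`: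
the uniform norm is dominated by the reduced C*-norm.  Here the bound
`sup_{x ∈ X} ‖π_x(f)‖ ≤ C` is expressed by requiring `‖f * ξ‖₂ ≤ C ‖ξ‖₂` for every
`x ∈ X` and every finitely supported `ξ` on the source fibre `G_x = s⁻¹(x)`
(such vectors are dense in `ℓ²(G_x)`, so this is exactly the operator norm bound for the
left regular representation `π_x(f) ξ = f * ξ`). -/
theorem stmt1 [LocallyCompactSpace G] (D : GroupoidData G) [T2Space ↥D.X]
    (hetale : D.IsEtale) (f : G → ℂ) (hf : f ∈ D.CcSpan)
    (C : ℝ) (hC : 0 ≤ C)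
    (hbound : ∀ x ∈ D.X, ∀ ξ : G → ℂ, {g : G | ξ g ≠ 0}.Finite →
      (∀ g, ξ g ≠ 0 → D.s g = x) →
      ∑ᶠ g ∈ {g : G | D.s g = x}, ‖D.convolve f ξ g‖ ^ 2 ≤
        C ^ 2 * ∑ᶠ g ∈ {g : G | D.s g = x}, ‖ξ g‖ ^ 2)
    (g : G) : ‖f g‖ ≤ C := by

  classical
  set x := D.s g with hx
  have hxX : x ∈ D.X := D.s_mem g
  have hrx : D.r x = x := D.r_unit x hxX
  have hsx : D.s x = x := D.s_unit x hxX
  set ξ : G → ℂ := fun h => if h = x then 1 else 0 with hξ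
  have hξsupp : {h : G | ξ h ≠ 0} = {x} := by
    ext h
    simp [hξ]
  -- fibers of the source map meet the support of f in a finite set
  have hfin : ∀ y : G, {h : G | D.s h = y ∧ f h ≠ 0}.Finite :=
    fibre_finite D f hf
  -- convolution with the delta at x is just f on the fibre
  have hconv : ∀ h : G, D.s h = x → D.convolve f ξ h = f h := by
    intro h shx
    have hPmem : (h, x) ∈ {p : G × G | D.s p.1 = D.r p.2 ∧ D.mul p.1 p.2 = h} := by
      constructor
      · rw [hrx, shx]
      · have := D.mul_unit h
        rwa [shx] at this
    have hkey : {p : G × G | D.s p.1 = D.r p.2 ∧ D.mul p.1 p.2 = h} ∩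
        Function.support (fun p : G × G => f p.1 * ξ p.2) =
        {(h, x)} ∩ Function.support (fun p : G × G => f p.1 * ξ p.2) := by
      ext p
      constructor
      · rintro ⟨⟨hp1, hp2⟩, hps⟩
        have hξp : ξ p.2 ≠ 0 := by
          intro h0
          exact hps (by simp [h0])
        have hp2x : p.2 = x := by
          by_contra hne
          exact hξp (by simp [hξ, hne])
        have hsp1 : D.s p.1 = x := by rw [hp1, hp2x, hrx]
        have hp1h : p.1 = h := by
          have := D.mul_unit p.1
          rw [hsp1] at this
          rw [← hp2, hp2x, this]
        refine ⟨?_, hps⟩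
        simp only [Set.mem_singleton_iff]
        exact Prod.ext hp1h hp2x
      · rintro ⟨hp, hps⟩
        simp only [Set.mem_singleton_iff] at hp
        exact ⟨hp ▸ hPmem, hps⟩
    unfold GroupoidData.convolve
    rw [← finsum_mem_inter_support, hkey, finsum_mem_inter_support,
      finsum_mem_singleton]
    simp [hξ]
  -- apply the bound
  have hb := hbound x hxX ξ (by rw [hξsupp]; exact Set.finite_singleton x)
    (fun h hne => by
      have : h = x := by
        by_contra hne'
        exact hne (by simp [hξ, hne'])
      rw [this, hsx])
  -- rewrite the left-hand side
  have hL : (∑ᶠ h ∈ {h : G | D.s h = x}, ‖D.convolve f ξ h‖ ^ 2) =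
      ∑ᶠ h ∈ {h : G | D.s h = x}, ‖f h‖ ^ 2 := by
    apply finsum_mem_congr rfl
    intro h hh
    rw [hconv h hh]
  -- rewrite the right-hand side: equals 1
  have hR : (∑ᶠ h ∈ {h : G | D.s h = x}, ‖ξ h‖ ^ 2) = 1 := by
    have hsupp : {h : G | D.s h = x} ∩
        Function.support (fun h => ‖ξ h‖ ^ 2) = {x} := by
      ext h
      simp only [Set.mem_inter_iff, Function.mem_support, Set.mem_setOf_eq,
        Set.mem_singleton_iff]
      constructor
      · rintro ⟨_, hne⟩
        by_contra hne'
        exact hne (by simp [hξ, hne'])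
      · rintro rfl
        refine ⟨hsx, ?_⟩
        simp [hξ]
    rw [← finsum_mem_inter_support, hsupp, finsum_mem_singleton]
    simp [hξ]
  rw [hL, hR, mul_one] at hb
  -- the sum of squares on the fibre dominates the single term at g
  have hfing : ({h : G | D.s h = x} ∩
      Function.support (fun h => ‖f h‖ ^ 2)).Finite := by
    refine Set.Finite.subset (hfin x) ?_
    rintro h ⟨hh, hne⟩
    refine ⟨hh, fun h0 => hne ?_⟩
    simp [h0]
  rw [← finsum_mem_inter_support] at hb
  have hsum := finsum_mem_eq_finite_toFinset_sum (fun h => ‖f h‖ ^ 2) hfing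
  rw [hsum] at hb
  by_cases hfg : f g = 0
  · rw [hfg]; simpa using hC
  have hgmem : g ∈ hfing.toFinset := by
    rw [Set.Finite.mem_toFinset]
    exact ⟨rfl, by simp [hfg]⟩
  have hterm : ‖f g‖ ^ 2 ≤ ∑ h ∈ hfing.toFinset, ‖f h‖ ^ 2 :=
    Finset.single_le_sum (f := fun h => ‖f h‖ ^ 2) (fun h _ => by positivity) hgmem
  nlinarith [norm_nonneg (f g)]
end

section
/- Let (x_i) be a net of units of G converging in G to elements a and b. Then a and b are isotropy elements with r(a) = s(a) = r(b) = s(b), the net (x_i) also converges to the product ab, and it converges to a^{-1}. Consequently, the set of all limit points of a net of units contained in a single fibre G_x^x is a subgroup of G_x^x. -/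
variable {G : Type} [TopologicalSpace G]

lemma GroupoidData.unit_inv (D : GroupoidData G) {u : G} (hu : u ∈ D.X) : D.inv u = u := by
  have h1 : D.mul u (D.inv u) = D.r u := D.mul_inv u
  have h2 : D.mul (D.r (D.inv u)) (D.inv u) = D.inv u := D.unit_mul _
  rw [D.r_inv] at h2
  rw [D.s_unit u hu] at h2
  rw [D.r_unit u hu] at h1
  rw [← h2, h1]

lemma GroupoidData.unit_mul_self (D : GroupoidData G) {u : G} (hu : u ∈ D.X) :
    D.mul u u = u := by
  have := D.mul_unit u
  rwa [D.s_unit u hu] at this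

lemma tends_r (D : GroupoidData G) {ι : Type} {l : Filter ι} {x : ι → G}
    (hx : ∀ i, x i ∈ D.X) {a : G} (ha : Filter.Tendsto x l (nhds a)) :
    Filter.Tendsto x l (nhds (D.r a)) := by
  have h : Filter.Tendsto (fun i => D.r (x i)) l (nhds (D.r a)) :=
    (D.continuous_r.tendsto a).comp ha
  exact h.congr fun i => D.r_unit (x i) (hx i)

lemma tends_s (D : GroupoidData G) {ι : Type} {l : Filter ι} {x : ι → G}
    (hx : ∀ i, x i ∈ D.X) {a : G} (ha : Filter.Tendsto x l (nhds a)) :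
    Filter.Tendsto x l (nhds (D.s a)) := by
  have h : Filter.Tendsto (fun i => D.s (x i)) l (nhds (D.s a)) :=
    (D.continuous_s.tendsto a).comp ha
  exact h.congr fun i => D.s_unit (x i) (hx i)

lemma tends_inv (D : GroupoidData G) {ι : Type} {l : Filter ι} {x : ι → G}
    (hx : ∀ i, x i ∈ D.X) {a : G} (ha : Filter.Tendsto x l (nhds a)) :
    Filter.Tendsto x l (nhds (D.inv a)) := by
  have h : Filter.Tendsto (fun i => D.inv (x i)) l (nhds (D.inv a)) :=
    (D.continuous_inv.tendsto a).comp ha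
  exact h.congr fun i => D.unit_inv (hx i)

lemma tends_mul (D : GroupoidData G) {ι : Type} {l : Filter ι} {x : ι → G}
    (hx : ∀ i, x i ∈ D.X) {a b : G} (ha : Filter.Tendsto x l (nhds a))
    (hb : Filter.Tendsto x l (nhds b)) (hab : D.s a = D.r b) :
    Filter.Tendsto x l (nhds (D.mul a b)) := by
  set S : Set (G × G) := {p : G × G | D.s p.1 = D.r p.2}
  have hp : Filter.Tendsto (fun i => (x i, x i)) l (nhds (a, b)) :=
    ha.prodMk_nhds hb
  have hmem : ∀ i, (x i, x i) ∈ S := fun i => by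
    simp only [S, Set.mem_setOf_eq, D.r_unit (x i) (hx i), D.s_unit (x i) (hx i)]
  have hpw : Filter.Tendsto (fun i => (x i, x i)) l (nhdsWithin (a, b) S) := by
    rw [tendsto_nhdsWithin_iff]
    exact ⟨hp, Filter.Eventually.of_forall hmem⟩
  have hcont := D.continuousOn_mul (a, b) (by exact hab : (a, b) ∈ S)
  have : Filter.Tendsto _ l (nhds (D.mul a b)) := Filter.Tendsto.comp hcont hpw
  exact this.congr fun i => D.unit_mul_self (hx i)

lemma lim_unique (D : GroupoidData G) [T2Space ↥D.X] {ι : Type} {l : Filter ι}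
    [l.NeBot] {x : ι → G} (hx : ∀ i, x i ∈ D.X) {u v : G} (hu : u ∈ D.X) (hv : v ∈ D.X)
    (htu : Filter.Tendsto x l (nhds u)) (htv : Filter.Tendsto x l (nhds v)) : u = v := by
  set x' : ι → ↥D.X := fun i => ⟨x i, hx i⟩
  have h1 : Filter.Tendsto x' l (nhds (⟨u, hu⟩ : ↥D.X)) := by
    rw [tendsto_subtype_rng]; exact htu
  have h2 : Filter.Tendsto x' l (nhds (⟨v, hv⟩ : ↥D.X)) := by
    rw [tendsto_subtype_rng]; exact htv
  have := tendsto_nhds_unique h1 h2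
  exact Subtype.ext_iff.mp this

/-- Let `(x_i)` be a net of units of `G` converging in `G` to `a` and to `b`.
Then `a` and `b` are isotropy elements with `r(a) = s(a) = r(b) = s(b)`, the net also converges
to `a·b` and to `a⁻¹`.  Consequently, for any unit `x₀`, the set of limit points of the net
lying in the fibre `G_{x₀}^{x₀}` is closed under multiplication and inversion and, if nonempty,
contains the unit `x₀`: it is a subgroup of `G_{x₀}^{x₀}`. -/
theorem stmt3 (D : GroupoidData G) (hXopen : IsOpen D.X) [T2Space ↥D.X]
    {ι : Type} (l : Filter ι) [l.NeBot] (x : ι → G) (hx : ∀ i, x i ∈ D.X)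
    (a b : G) (ha : Filter.Tendsto x l (nhds a)) (hb : Filter.Tendsto x l (nhds b)) :
    (D.r a = D.s a ∧ D.r b = D.s b ∧ D.r a = D.r b ∧ D.s a = D.s b) ∧
    Filter.Tendsto x l (nhds (D.mul a b)) ∧
    Filter.Tendsto x l (nhds (D.inv a)) ∧
    ∀ x0 ∈ D.X,
      (∀ c d : G, (D.r c = x0 ∧ D.s c = x0 ∧ Filter.Tendsto x l (nhds c)) →
        (D.r d = x0 ∧ D.s d = x0 ∧ Filter.Tendsto x l (nhds d)) →
        D.r (D.mul c d) = x0 ∧ D.s (D.mul c d) = x0 ∧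
          Filter.Tendsto x l (nhds (D.mul c d))) ∧
      (∀ c : G, (D.r c = x0 ∧ D.s c = x0 ∧ Filter.Tendsto x l (nhds c)) →
        D.r (D.inv c) = x0 ∧ D.s (D.inv c) = x0 ∧
          Filter.Tendsto x l (nhds (D.inv c))) ∧
      (∀ c : G, (D.r c = x0 ∧ D.s c = x0 ∧ Filter.Tendsto x l (nhds c)) →
        Filter.Tendsto x l (nhds x0)) := by
  have hra := tends_r D hx ha
  have hsa := tends_s D hx ha
  have hrb := tends_r D hx hb
  have hsb := tends_s D hx hb
  have e1 : D.r a = D.s a := lim_unique D hx (D.r_mem a) (D.s_mem a) hra hsa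
  have e2 : D.r b = D.s b := lim_unique D hx (D.r_mem b) (D.s_mem b) hrb hsb
  have e3 : D.r a = D.r b := lim_unique D hx (D.r_mem a) (D.r_mem b) hra hrb
  have e4 : D.s a = D.s b := lim_unique D hx (D.s_mem a) (D.s_mem b) hsa hsb
  have hab : D.s a = D.r b := by rw [← e1, e3]
  refine ⟨⟨e1, e2, e3, e4⟩, tends_mul D hx ha hb hab, tends_inv D hx ha, ?_⟩
  intro x0 hx0
  refine ⟨?_, ?_, ?_⟩
  · rintro c d ⟨hrc, hsc, hc⟩ ⟨hrd, hsd, hd⟩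
    have hcd : D.s c = D.r d := by rw [hsc, hrd]
    exact ⟨by rw [D.r_mul c d hcd, hrc], by rw [D.s_mul c d hcd, hsd],
      tends_mul D hx hc hd hcd⟩
  · rintro c ⟨hrc, hsc, hc⟩
    exact ⟨by rw [D.r_inv, hsc], by rw [D.s_inv, hrc], tends_inv D hx hc⟩
  · rintro c ⟨hrc, hsc, hc⟩
    have := tends_s D hx hc
    rwa [hsc] at this
end

section
/- Let Γ be a group and S ⊆ Γ a finite subset of cardinality m such that: (1) for every γ ∈ S the cyclic subgroup ⟨γ⟩ is contained in S, and (2) S is closed under conjugation by elements of the subgroup ⟨S⟩ generated by S. Then every element of ⟨S⟩ can be written as a product h₁⋯h_ℓ of pairwise distinct elements of S lying in pairwise distinct cyclic subgroups ⟨γ⟩ (γ ∈ S), so in particular the subgroup ⟨S⟩ generated by S has cardinality at most m!. -/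
private lemma prod_conj_map {Γ : Type} [Group Γ] (x : Γ) (B : List Γ) :
    (B.map (fun y => x⁻¹ * y * x)).prod = x⁻¹ * B.prod * x := by
  induction B with
  | nil => simp
  | cons b B ih => simp only [List.map_cons, List.prod_cons, ih]; group

/-- Key rewriting lemma: any product of elements of `S` can be rewritten as a product of
elements of `S` that pairwise generate different cyclic subgroups. -/
private lemma key_lemma {Γ : Type} [Group Γ] (S : Finset Γ)
    (h1 : ∀ γ ∈ S, ∀ k : ℤ, γ ^ k ∈ S)
    (h2 : ∀ γ ∈ S, ∀ g ∈ Subgroup.closure (S : Set Γ), g⁻¹ * γ * g ∈ S) :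
    ∀ (n : ℕ) (L : List Γ), L.length ≤ n → (∀ x ∈ L, x ∈ S) →
      ∃ M : List Γ, (∀ x ∈ M, x ∈ S) ∧
        M.Pairwise (fun a b => a ∉ Subgroup.zpowers b ∧ b ∉ Subgroup.zpowers a) ∧
        M.prod = L.prod ∧ M.length ≤ L.length := by
  intro n
  induction n with
  | zero =>
    intro L hL _
    have : L = [] := List.length_eq_zero_iff.mp (Nat.le_zero.mp hL)
    subst this
    exact ⟨[], by simp, List.Pairwise.nil, rfl, le_rfl⟩
  | succ n ih =>
    intro L hL hS
    rcases L.eq_nil_or_concat with rfl | ⟨T, x, rfl⟩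
    · exact ⟨[], by simp, List.Pairwise.nil, rfl, le_rfl⟩
    · simp only [List.concat_eq_append] at hL hS ⊢
      have hT : ∀ y ∈ T, y ∈ S := fun y hy => hS y (by simp [hy])
      have hx : x ∈ S := hS x (by simp)
      have hTlen : T.length ≤ n := by
        simp only [List.length_append, List.length_cons, List.length_nil] at hL
        omega
      obtain ⟨M, hMS, hMp, hMprod, hMlen⟩ := ih T hTlen hT
      by_cases hgood : ∀ a ∈ M, a ∉ Subgroup.zpowers x ∧ x ∉ Subgroup.zpowers a
      · refine ⟨M ++ [x], ?_, ?_, ?_, ?_⟩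
        · intro y hy
          rcases List.mem_append.mp hy with hy | hy
          · exact hMS y hy
          · simp at hy; subst hy; exact hx
        · rw [List.pairwise_append]
          exact ⟨hMp, List.pairwise_singleton _ _, by
            intro a ha b hb
            simp at hb; subst hb
            exact hgood a ha⟩
        · simp [hMprod]
        · simp only [List.length_append, List.length_cons, List.length_nil]
          omega
      · push_neg at hgood
        obtain ⟨a, haM, hbad⟩ := hgood
        have hbad' : a ∈ Subgroup.zpowers x ∨ x ∈ Subgroup.zpowers a := by
          by_cases h : a ∈ Subgroup.zpowers x
          · exact Or.inl h
          · exact Or.inr (hbad h)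
        obtain ⟨A, B, rfl⟩ := List.append_of_mem haM
        have haS : a ∈ S := hMS a haM
        have hax : a * x ∈ S := by
          rcases hbad' with h | h
          · obtain ⟨k, hk⟩ := h
            have hk' : x ^ k = a := hk
            have := h1 x hx (k + 1)
            rwa [zpow_add_one, hk'] at this
          · obtain ⟨k, hk⟩ := h
            have hk' : a ^ k = x := hk
            have := h1 a haS (1 + k)
            rwa [zpow_one_add, hk'] at this
        have hL1S : ∀ y ∈ A ++ (a * x) :: B.map (fun y => x⁻¹ * y * x), y ∈ S := by
          intro y hy
          rcases List.mem_append.mp hy with hy | hy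
          · exact hMS y (List.mem_append.mpr (Or.inl hy))
          · rcases List.mem_cons.mp hy with rfl | hy
            · exact hax
            · obtain ⟨z, hz, rfl⟩ := List.mem_map.mp hy
              exact h2 z (hMS z (by simp [hz])) x (Subgroup.subset_closure hx)
        have hMlen' : A.length + (B.length + 1) ≤ T.length := by
          simpa using hMlen
        have hL1len : (A ++ (a * x) :: B.map (fun y => x⁻¹ * y * x)).length ≤ n := by
          simp only [List.length_append, List.length_cons, List.length_map]
          omega
        obtain ⟨M', hM'S, hM'p, hM'prod, hM'len⟩ := ih _ hL1len hL1S
        refine ⟨M', hM'S, hM'p, ?_, ?_⟩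
        · rw [hM'prod]
          have h1p : (A ++ (a * x) :: B.map (fun y => x⁻¹ * y * x)).prod
              = A.prod * ((a * x) * (x⁻¹ * B.prod * x)) := by
            rw [List.prod_append, List.prod_cons, prod_conj_map]
          have h2p : (T ++ [x]).prod = T.prod * x := by simp
          rw [h1p, h2p, ← hMprod, List.prod_append, List.prod_cons]
          group
        · have : M'.length ≤ A.length + (B.length + 1) := by
            simpa using hM'len
          simp only [List.length_append, List.length_cons, List.length_nil]
          omega

/-- Let `Γ` be a group and `S ⊆ Γ` a finite subset of cardinality `m` such that
(1) for every `γ ∈ S` the cyclic subgroup `⟨γ⟩` is contained in `S`, and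
(2) `S` is closed under conjugation by elements of `⟨S⟩`.
Then every element of `⟨S⟩` is a product `h₁ ⋯ h_ℓ` of pairwise distinct elements of `S`
lying in pairwise distinct cyclic subgroups `⟨γ⟩` (γ ∈ S); in particular `⟨S⟩` is finite of
cardinality at most `m!`. -/
theorem stmt4 {Γ : Type} [Group Γ] (S : Finset Γ) (m : ℕ) (hm : S.card = m)
    (h1 : ∀ γ ∈ S, ∀ k : ℤ, γ ^ k ∈ S)
    (h2 : ∀ γ ∈ S, ∀ g ∈ Subgroup.closure (S : Set Γ), g⁻¹ * γ * g ∈ S) :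
    (∀ g ∈ Subgroup.closure (S : Set Γ), ∃ (ℓ : ℕ) (h : Fin ℓ → Γ) (γ : Fin ℓ → Γ),
      (∀ j, γ j ∈ S) ∧ (∀ j, h j ∈ S) ∧ (∀ j, h j ∈ Subgroup.zpowers (γ j)) ∧
      (∀ j k, j ≠ k → h j ∉ Subgroup.zpowers (γ k)) ∧
      (List.ofFn h).prod = g) ∧
    (Subgroup.closure (S : Set Γ) : Set Γ).Finite ∧
    (Subgroup.closure (S : Set Γ) : Set Γ).ncard ≤ Nat.factorial m := by
  classical
  -- every element of the closure is the product of a list of elements of S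
  have hlist : ∀ g ∈ Subgroup.closure (S : Set Γ), ∃ l : List Γ,
      (∀ x ∈ l, x ∈ S) ∧ l.prod = g := by
    intro g hg
    have hg' : g ∈ Submonoid.closure ((S : Set Γ) ∪ (S : Set Γ)⁻¹) := by
      rw [← Subgroup.closure_toSubmonoid]
      exact hg
    obtain ⟨l, hl, hprod⟩ := Submonoid.exists_list_of_mem_closure hg'
    refine ⟨l, fun x hx => ?_, hprod⟩
    rcases hl x hx with h | h
    · exact h
    · have hxS : x⁻¹ ∈ S := h
      have := h1 x⁻¹ hxS (-1)
      simpa using this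
  -- every element of the closure has a "valid" representation
  have hvalid : ∀ g ∈ Subgroup.closure (S : Set Γ), ∃ M : List Γ,
      (∀ x ∈ M, x ∈ S) ∧
      M.Pairwise (fun a b => a ∉ Subgroup.zpowers b ∧ b ∉ Subgroup.zpowers a) ∧
      M.prod = g := by
    intro g hg
    obtain ⟨l, hlS, hlprod⟩ := hlist g hg
    obtain ⟨M, hMS, hMp, hMprod, _⟩ := key_lemma S h1 h2 l.length l le_rfl hlS
    exact ⟨M, hMS, hMp, by rw [hMprod, hlprod]⟩
  refine ⟨?_, ?_⟩
  · -- first part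
    intro g hg
    obtain ⟨M, hMS, hMp, hMprod⟩ := hvalid g hg
    refine ⟨M.length, M.get, M.get, fun j => hMS _ (M.get_mem _),
      fun j => hMS _ (M.get_mem _), fun j => Subgroup.mem_zpowers _, ?_, ?_⟩
    · intro j k hjk
      rw [List.pairwise_iff_get] at hMp
      rcases lt_or_gt_of_ne (Fin.val_ne_of_ne hjk) with h | h
      · exact (hMp j k h).1
      · exact (hMp k j h).2
    · rw [List.ofFn_get, hMprod]
  · -- finiteness and cardinality
    set T : Finset Γ := S.erase 1 with hT
    set n : ℕ := T.card with hn
    set perms : Finset (List Γ) := (T.toList.permutations).toFinset with hperms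
    set candidates : Finset Γ :=
      ((Finset.range (n + 1)) ×ˢ perms).image (fun p => (p.2.take p.1).prod) with hcand
    have hsub : (Subgroup.closure (S : Set Γ) : Set Γ) ⊆ ↑candidates := by
      intro g hg
      obtain ⟨M, hMS, hMp, hMprod⟩ := hvalid g hg
      -- produce a nodup list over T with product g
      obtain ⟨l, hlT, hlnd, hlprod⟩ :
          ∃ l : List Γ, (∀ x ∈ l, x ∈ T) ∧ l.Nodup ∧ l.prod = g := by
        rcases M with _ | ⟨a, M1⟩
        · exact ⟨[], by simp, by simp, by simpa using hMprod⟩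
        rcases M1 with _ | ⟨b, M''⟩
        · by_cases ha1 : a = 1
          · exact ⟨[], by simp, by simp, by simp [← hMprod, ha1]⟩
          · exact ⟨[a], by simp [hT, ha1, hMS a (by simp)], by simp, by simpa using hMprod⟩
        have hne1 : ∀ y ∈ a :: b :: M'', y ≠ 1 := by
          intro y hy
          rcases List.mem_cons.mp hy with rfl | hy
          · intro h
            exact ((List.pairwise_cons.mp hMp).1 b (by simp)).1 (h ▸ Subgroup.one_mem _)
          · intro h
            exact ((List.pairwise_cons.mp hMp).1 y hy).2 (h ▸ Subgroup.one_mem _)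
        refine ⟨a :: b :: M'', ?_, ?_, hMprod⟩
        · intro x hx
          exact Finset.mem_erase.mpr ⟨hne1 x hx, hMS x hx⟩
        · exact hMp.imp (fun {x y} hxy => by
            rintro rfl
            exact hxy.1 (Subgroup.mem_zpowers x))
      -- extend l to a permutation of T.toList
      have hle : (l : Multiset Γ) ≤ T.val := by
        rw [Multiset.le_iff_subset (by exact_mod_cast hlnd)]
        intro x hx
        exact hlT x (by simpa using hx)
      have hlen : l.length ≤ n := by
        have := Multiset.card_le_card hle
        simpa [hn] using this
      have hperm : List.Perm (l ++ (T.val - (l : Multiset Γ)).toList) T.toList := by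
        rw [← Multiset.coe_eq_coe]
        have h1' : ((T.toList : Multiset Γ)) = T.val := Multiset.coe_toList _
        rw [h1', ← Multiset.coe_add, Multiset.coe_toList]
        exact add_tsub_cancel_of_le hle
      have htake : (l ++ (T.val - (l : Multiset Γ)).toList).take l.length = l :=
        List.take_left
      rw [hcand]
      simp only [Finset.coe_image, Set.mem_image, Finset.mem_coe, Finset.mem_product]
      refine ⟨(l.length, l ++ (T.val - (l : Multiset Γ)).toList), ⟨?_, ?_⟩, ?_⟩
      · simp only [Finset.mem_range]; omega
      · rw [hperms, List.mem_toFinset, List.mem_permutations]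
        exact hperm
      · simp only
        rw [htake, hlprod]
    have hfin : (Subgroup.closure (S : Set Γ) : Set Γ).Finite :=
      Set.Finite.subset (candidates.finite_toSet) hsub
    refine ⟨hfin, ?_⟩
    have hcard : candidates.card ≤ (n + 1) * Nat.factorial n := by
      calc candidates.card ≤ ((Finset.range (n + 1)) ×ˢ perms).card := Finset.card_image_le
        _ = (n + 1) * perms.card := by rw [Finset.card_product, Finset.card_range]
        _ ≤ (n + 1) * Nat.factorial n := by
            apply Nat.mul_le_mul_left
            calc perms.card ≤ T.toList.permutations.length := List.toFinset_card_le _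
              _ = Nat.factorial T.toList.length := List.length_permutations _
              _ = Nat.factorial n := by rw [Finset.length_toList]
    have hfact : (n + 1) * Nat.factorial n ≤ Nat.factorial m := by
      rcases S.eq_empty_or_nonempty with hSe | hne
      · have hm0 : m = 0 := by rw [← hm, hSe]; simp
        have hn0 : n = 0 := by rw [hn, hT, hSe]; simp
        simp [hm0, hn0, Nat.factorial]
      · have h1S : (1 : Γ) ∈ S := by
          obtain ⟨γ, hγ⟩ := hne
          have := h1 γ hγ 0
          simpa using this
        have hnm : n = m - 1 := by
          rw [hn, hT, Finset.card_erase_of_mem h1S, hm]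
        have hm1 : 1 ≤ m := by
          rw [← hm]
          exact Finset.card_pos.mpr hne
        rw [hnm, show m - 1 + 1 = m by omega]
        exact le_of_eq (Nat.mul_factorial_pred (by omega))
    calc (Subgroup.closure (S : Set Γ) : Set Γ).ncard ≤ (candidates : Set Γ).ncard :=
          Set.ncard_le_ncard hsub (candidates.finite_toSet)
      _ = candidates.card := Set.ncard_coe_finset _
      _ ≤ (n + 1) * Nat.factorial n := hcard
      _ ≤ Nat.factorial m := hfact
end

section
/- Let f ∈ 𝒞_c(G) and ε > 0 be such that the set S_ε(f) := {g ∈ G : |f(g)| > ε} has empty interior in G. Then s(S_ε(f)) is nowhere dense in the unit space X. -/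
variable {G : Type} [TopologicalSpace G]

section Aux

variable {Y : Type*} [TopologicalSpace Y]

/-- The union of a closed nowhere dense set and a set with empty interior has
empty interior. -/
lemma aux_union_nwd {A B : Set Y} (hA : IsClosed A) (hiA : interior A = ∅)
    (hiB : interior B = ∅) : interior (A ∪ B) = ∅ := by
  have hO : IsOpen (interior (A ∪ B) \ A) := isOpen_interior.sdiff hA
  have hsub : interior (A ∪ B) \ A ⊆ B := fun y hy =>
    (interior_subset hy.1).resolve_left hy.2
  have h2 : interior (A ∪ B) ⊆ A := by
    intro y hy
    by_contra hyA
    have hmem : y ∈ interior B := interior_maximal hsub hO ⟨hy, hyA⟩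
    rw [hiB] at hmem
    exact hmem
  have h3 : interior (A ∪ B) ⊆ interior A := interior_maximal h2 isOpen_interior
  rw [hiA] at h3
  exact Set.subset_empty_iff.mp h3

/-- A finite union of closed sets with empty interiors has empty interior. -/
lemma aux_iUnion_nwd : ∀ (n : ℕ) (A : Fin n → Set Y), (∀ i, IsClosed (A i)) →
    (∀ i, interior (A i) = ∅) → interior (⋃ i, A i) = ∅ := by
  intro n
  induction n with
  | zero => intro A _ _; simp
  | succ m ih =>
    intro A hA hiA
    have : (⋃ i, A i) = A 0 ∪ ⋃ i : Fin m, A i.succ := by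
      ext x
      simp only [Set.mem_iUnion, Set.mem_union]
      constructor
      · rintro ⟨i, hi⟩
        rcases Fin.eq_zero_or_eq_succ i with h | ⟨j, rfl⟩
        · exact Or.inl (h ▸ hi)
        · exact Or.inr ⟨j, hi⟩
      · rintro (h | ⟨j, hj⟩)
        · exact ⟨0, h⟩
        · exact ⟨j.succ, hj⟩
    rw [this]
    exact aux_union_nwd (hA 0) (hiA 0)
      (ih (fun i => A i.succ) (fun i => hA i.succ) (fun i => hiA i.succ))

end Aux

/-- Let `f ∈ 𝒞_c(G)` and `ε > 0` be such that `S_ε(f) = {g : |f(g)| > ε}` has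
empty interior in `G`.  Then `s(S_ε(f))` is nowhere dense in the unit space `X`
(i.e. the closure, taken in the subspace `X`, of `s(S_ε(f))` has empty interior in `X`). -/
theorem stmt7 [LocallyCompactSpace G] (D : GroupoidData G) [T2Space ↥D.X]
    (hXopen : IsOpen D.X) (hetale : D.IsEtale)
    (f : G → ℂ) (hf : f ∈ D.CcSpan) (ε : ℝ) (hε : 0 < ε)
    (hint : interior {g : G | ε < ‖f g‖} = ∅) :
    interior (closure {x : ↥D.X | ∃ g : G, ε < ‖f g‖ ∧ D.s g = ↑x}) = ∅ := by
  classical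
  -- Extract a finite linear-combination representation of f.
  rw [GroupoidData.CcSpan, Submodule.mem_span_set'] at hf
  obtain ⟨n, c, v, hsum⟩ := hf
  have hv : ∀ i, ∃ U : Set G, D.IsOpenBisection U ∧ MemCc U (v i : G → ℂ) := fun i => (v i).2
  choose U hUbis hUcc using hv
  choose K hKcomp hKsub hKsupp using fun i => (hUcc i).2.2
  have hfval : ∀ g, f g = ∑ i, c i * (v i : G → ℂ) g := by
    intro g
    rw [← hsum]
    simp [Finset.sum_apply]
  -- The "bad" set where f may fail to be continuous.
  set B : Set G := ⋃ i, (closure (K i) \ U i) with hB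
  have hBclosed : IsClosed B :=
    isClosed_iUnion_of_finite fun i => isClosed_closure.sdiff (hUbis i).1
  have hBint : interior B = ∅ := by
    apply aux_iUnion_nwd
    · exact fun i => isClosed_closure.sdiff (hUbis i).1
    · intro i
      rw [Set.eq_empty_iff_forall_notMem]
      intro x hx
      have hO : IsOpen (interior (closure (K i) \ U i)) := isOpen_interior
      have hdisj : interior (closure (K i) \ U i) ∩ K i = ∅ := by
        rw [Set.eq_empty_iff_forall_notMem]
        rintro y ⟨hy1, hy2⟩
        exact (interior_subset hy1).2 (hKsub i hy2)
      have hx1 : x ∈ closure (K i) := (interior_subset hx).1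
      obtain ⟨y, hy1, hy2⟩ := _root_.mem_closure_iff.1 hx1 _ hO hx
      exact (Set.eq_empty_iff_forall_notMem.1 hdisj y) ⟨hy1, hy2⟩
  -- f is continuous at every point outside B.
  have hfc : ∀ g ∉ B, ContinuousAt f g := by
    intro g hg
    have hi : ∀ i, ContinuousAt (fun x => c i * (v i : G → ℂ) x) g := by
      intro i
      by_cases hgU : g ∈ U i
      · exact continuousAt_const.mul
          ((hUcc i).1.continuousAt ((hUbis i).1.mem_nhds hgU))
      · have hgK : g ∉ closure (K i) := by
          intro hgK
          exact hg (Set.mem_iUnion.2 ⟨i, hgK, hgU⟩)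
        have hzero : (fun x => c i * (v i : G → ℂ) x) =ᶠ[nhds g] (fun _ => (0:ℂ)) := by
          filter_upwards [isClosed_closure.isOpen_compl.mem_nhds hgK] with x hx
          have : (v i : G → ℂ) x = 0 := by
            by_contra hne
            exact hx (subset_closure (hKsupp i x hne))
          simp [this]
        exact continuousAt_const.congr hzero.symm
    have hsumc : ContinuousAt (fun x => ∑ i, c i * (v i : G → ℂ) x) g := by
      exact tendsto_finset_sum _ fun i _ => hi i
    exact hsumc.congr (Filter.Eventually.of_forall fun x => (hfval x).symm)
  -- Suppose the conclusion fails.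
  by_contra hne
  rw [← Ne, ← Set.nonempty_iff_ne_empty] at hne
  set T : Set ↥D.X := {x : ↥D.X | ∃ g : G, ε < ‖f g‖ ∧ D.s g = ↑x} with hT
  set V : Set ↥D.X := interior (closure T) with hV
  -- Pieces according to the bisections.
  set A : Fin n → Set ↥D.X :=
    fun i => {x : ↥D.X | ∃ g : G, ε < ‖f g‖ ∧ g ∈ U i ∧ D.s g = ↑x} with hA
  have hTsub : T ⊆ ⋃ i, A i := by
    rintro x ⟨g, hg1, hg2⟩
    have hfg : f g ≠ 0 := by
      intro h0
      rw [h0] at hg1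
      simp at hg1
      exact absurd hg1 (not_lt.2 hε.le)
    have : ∑ i, c i * (v i : G → ℂ) g ≠ 0 := by rw [← hfval]; exact hfg
    obtain ⟨i, _, hi⟩ := Finset.exists_ne_zero_of_sum_ne_zero this
    have hvne : (v i : G → ℂ) g ≠ 0 := fun h => hi (by simp [h])
    exact Set.mem_iUnion.2 ⟨i, g, hg1, hKsub i (hKsupp i g hvne), hg2⟩
  -- Baire category in the unit space.
  haveI : LocallyCompactSpace ↥D.X := hXopen.locallyCompactSpace
  have hclsub : closure T ⊆ ⋃ i, closure (A i) := by
    rw [← closure_iUnion_of_finite]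
    exact closure_mono hTsub
  set C : Option (Fin n) → Set ↥D.X := fun o => o.elim Vᶜ (fun i => closure (A i)) with hC
  have hCclosed : ∀ o, IsClosed (C o) := by
    rintro (_ | i)
    · exact isOpen_interior.isClosed_compl
    · exact isClosed_closure
  have hCcover : ⋃ o, C o = Set.univ := by
    rw [Set.eq_univ_iff_forall]
    intro x
    by_cases hx : x ∈ V
    · obtain ⟨i, hi⟩ := Set.mem_iUnion.1 (hclsub (interior_subset hx))
      exact Set.mem_iUnion.2 ⟨some i, hi⟩
    · exact Set.mem_iUnion.2 ⟨none, hx⟩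
  have hdense := dense_iUnion_interior_of_closed hCclosed hCcover
  obtain ⟨y, hy1, hy2⟩ := hdense.exists_mem_open isOpen_interior hne
  obtain ⟨o, hyo⟩ := Set.mem_iUnion.1 hy1
  obtain (_ | j) := o
  · exact (interior_subset hyo) hy2
  -- So some closure (A j) has interior meeting V.
  -- Transfer to G.
  set W0 : Set ↥D.X := interior (closure (A j)) with hW0
  set W : Set G := Subtype.val '' W0 with hW
  have hWopen : IsOpen W := hXopen.isOpenEmbedding_subtypeVal.isOpenMap _ isOpen_interior
  have hWne : W.Nonempty := ⟨y, y, hyo, rfl⟩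
  set AG : Set G := D.s '' ({g : G | ε < ‖f g‖} ∩ U j) with hAG
  have hWsub : W ⊆ closure AG := by
    rintro w ⟨x, hx, rfl⟩
    have h1 : A j ⊆ Subtype.val ⁻¹' AG := by
      rintro z ⟨g, hg1, hg2, hg3⟩
      exact ⟨g, ⟨hg1, hg2⟩, hg3⟩
    have h2 : closure (A j) ⊆ Subtype.val ⁻¹' closure AG :=
      (closure_mono h1).trans (continuous_subtype_val.closure_preimage_subset AG)
    exact h2 (interior_subset hx)
  -- The open set in the bisection U j lying over W.
  set O : Set G := U j ∩ D.s ⁻¹' W with hO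
  have hOopen : IsOpen O := (hUbis j).1.inter (hWopen.preimage D.continuous_s)
  have hOne : O.Nonempty := by
    obtain ⟨w, hw⟩ := hWne
    obtain ⟨z, hz1, hz2⟩ := _root_.mem_closure_iff.1 (hWsub hw) _ hWopen hw
    obtain ⟨h, ⟨hh1, hh2⟩, rfl⟩ := hz2
    exact ⟨h, hh2, hz1⟩
  set O' : Set G := O \ B with hO'
  have hO'open : IsOpen O' := hOopen.sdiff hBclosed
  have hO'ne : O'.Nonempty := by
    rw [Set.nonempty_iff_ne_empty]
    intro hOB
    have hsub : O ⊆ B := by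
      intro g hg
      by_contra hgB
      exact (Set.eq_empty_iff_forall_notMem.1 hOB g) ⟨hg, hgB⟩
    have : O ⊆ interior B := interior_maximal hsub hOopen
    rw [hBint] at this
    obtain ⟨g, hg⟩ := hOne
    exact this hg
  have hO'U : O' ⊆ U j := fun g hg => hg.1.1
  have hsO'open : IsOpen (D.s '' O') := (hUbis j).2.2.2.2 O' hO'U hO'open
  have hsO'ne : (D.s '' O').Nonempty := hO'ne.image _
  have hsO'W : D.s '' O' ⊆ W := by
    rintro _ ⟨g, hg, rfl⟩
    exact hg.1.2
  -- Find a point of S ∩ O' using the injectivity of s on U j.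
  obtain ⟨w, hw⟩ := hsO'ne
  obtain ⟨z, hz1, hz2⟩ := _root_.mem_closure_iff.1 (hWsub (hsO'W hw)) _ hsO'open hw
  obtain ⟨h, ⟨hh1, hh2⟩, hzh⟩ := hz2
  obtain ⟨g, hg, hgz⟩ := hz1
  have hgh : g = h := (hUbis j).2.2.1 (hO'U hg) hh2 (by rw [hgz, hzh])
  -- g ∈ S and g ∉ B : contradiction with hint.
  have hgS : ε < ‖f g‖ := hgh ▸ hh1
  have hgB : g ∉ B := hg.2
  have hcont : ContinuousAt (fun x => ‖f x‖) g := (hfc g hgB).norm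
  have hev : ∀ᶠ x in nhds g, ε < ‖f x‖ :=
    continuousAt_const.eventually_lt hcont hgS
  have hmem : g ∈ interior {x : G | ε < ‖f x‖} :=
    mem_interior_iff_mem_nhds.2 hev
  rw [hint] at hmem
  exact hmem
end

section
/- An element f of the reduced groupoid C*-algebra C*_r(G) lies in the singular ideal J = {f ∈ C*_r(G) : s(supp°(f)) has empty interior} if and only if supp°(f) has empty interior in G. -/
variable {G : Type} [TopologicalSpace G]

/-- Key structure lemma: every `h ∈ 𝒞_c(G)` is continuous on a dense open set, and its
strict support is covered by finitely many open bisections. -/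
theorem ccSpan_structure (D : GroupoidData G) {h : G → ℂ} (hh : h ∈ D.CcSpan) :
    ∃ (Dh : Set G) (L : List (Set G)),
      IsOpen Dh ∧ Dense Dh ∧ ContinuousOn h Dh ∧
      (∀ U ∈ L, D.IsOpenBisection U) ∧
      (∀ g, h g ≠ 0 → ∃ U ∈ L, g ∈ U) := by
  induction hh using Submodule.span_induction with
  | mem φ hφ =>
    obtain ⟨U, hU, hcont, hvan, K, hKcomp, hKU, hsupp⟩ := hφ
    refine ⟨U ∪ (closure K)ᶜ, [U], hU.1.union isClosed_closure.isOpen_compl, ?_, ?_, ?_, ?_⟩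
    · rw [dense_iff_inter_open]
      intro O hO ⟨x, hx⟩
      by_cases hOU : (O ∩ U).Nonempty
      · exact hOU.imp fun y hy => ⟨hy.1, Or.inl hy.2⟩
      · refine ⟨x, hx, Or.inr fun hxK => ?_⟩
        obtain ⟨k, hkO, hkK⟩ := mem_closure_iff.1 hxK O hO hx
        exact hOU ⟨k, hkO, hKU hkK⟩
    · refine continuousOn_of_forall_continuousAt ?_
      intro x hx
      by_cases hxU : x ∈ U
      · exact hcont.continuousAt (hU.1.mem_nhds hxU)
      · have hx' : x ∈ (closure K)ᶜ := hx.resolve_left hxU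
        refine Filter.EventuallyEq.continuousAt (y := (0 : ℂ)) ?_
        filter_upwards [isClosed_closure.isOpen_compl.mem_nhds hx'] with y hy
        by_contra hne
        exact hy (subset_closure (hsupp y hne))
    · intro V hV; simp only [List.mem_singleton] at hV; exact hV ▸ hU
    · intro g hg
      exact ⟨U, List.mem_singleton.2 rfl, hKU (hsupp g hg)⟩
  | zero =>
    exact ⟨Set.univ, [], isOpen_univ, dense_univ, continuousOn_const.congr fun _ _ => rfl,
      fun U hU => absurd hU List.not_mem_nil, fun g hg => absurd rfl hg⟩
  | add φ ψ hφm hψm ihφ ihψ =>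
    obtain ⟨Dφ, Lφ, hDφo, hDφd, hDφc, hLφ, hSφ⟩ := ihφ
    obtain ⟨Dψ, Lψ, hDψo, hDψd, hDψc, hLψ, hSψ⟩ := ihψ
    refine ⟨Dφ ∩ Dψ, Lφ ++ Lψ, hDφo.inter hDψo, hDφd.inter_of_isOpen_left hDψd hDφo,
      (hDφc.mono Set.inter_subset_left).add (hDψc.mono Set.inter_subset_right), ?_, ?_⟩
    · intro U hU
      rcases List.mem_append.1 hU with h' | h'
      · exact hLφ U h'
      · exact hLψ U h'
    · intro g hg
      have : φ g ≠ 0 ∨ ψ g ≠ 0 := by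
        by_contra hc
        push_neg at hc
        exact hg (by simp [Pi.add_apply, hc.1, hc.2])
      rcases this with h' | h'
      · obtain ⟨U, hU, hgU⟩ := hSφ g h'
        exact ⟨U, List.mem_append.2 (Or.inl hU), hgU⟩
      · obtain ⟨U, hU, hgU⟩ := hSψ g h'
        exact ⟨U, List.mem_append.2 (Or.inr hU), hgU⟩
  | smul c φ hφm ihφ =>
    obtain ⟨Dφ, Lφ, hDφo, hDφd, hDφc, hLφ, hSφ⟩ := ihφ
    refine ⟨Dφ, Lφ, hDφo, hDφd, hDφc.const_smul c, hLφ, ?_⟩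
    intro g hg
    refine hSφ g fun h0 => hg ?_
    simp [Pi.smul_apply, h0]

/-- If a nonempty open set is covered by the closures of the members of a finite list of sets,
then one of those closures contains a nonempty open set. -/
theorem list_closure_cover {α : Type} [TopologicalSpace α] :
    ∀ (L : List (Set α)) (W : Set α), IsOpen W → W.Nonempty →
      (∀ x ∈ W, ∃ C ∈ L, x ∈ closure C) →
      ∃ C ∈ L, ∃ V : Set α, IsOpen V ∧ V.Nonempty ∧ V ⊆ closure C
  | [], W, _, ⟨x, hx⟩, hcov => by
      obtain ⟨C, hC, _⟩ := hcov x hx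
      exact absurd hC List.not_mem_nil
  | C :: L', W, hWo, hWne, hcov => by
      by_cases hWC : ∀ x ∈ W, x ∈ closure C
      · exact ⟨C, List.mem_cons_self, W, hWo, hWne, hWC⟩
      · push_neg at hWC
        obtain ⟨x, hxW, hxC⟩ := hWC
        have hW'o : IsOpen (W ∩ (closure C)ᶜ) := hWo.inter isClosed_closure.isOpen_compl
        have hW'ne : (W ∩ (closure C)ᶜ).Nonempty := ⟨x, hxW, hxC⟩
        have hcov' : ∀ y ∈ W ∩ (closure C)ᶜ, ∃ C' ∈ L', y ∈ closure C' := by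
          rintro y ⟨hyW, hyC⟩
          obtain ⟨C', hC', hyC'⟩ := hcov y hyW
          rcases List.mem_cons.1 hC' with rfl | hmem
          · exact absurd hyC' hyC
          · exact ⟨C', hmem, hyC'⟩
        obtain ⟨C', hC', V, hV⟩ := list_closure_cover L' _ hW'o hW'ne hcov'
        exact ⟨C', List.mem_cons_of_mem C hC', V, hV⟩

/-- An element `f` of the reduced groupoid C*-algebra `C*_r(G)` lies in the
singular ideal `J = {f : s(supp°(f)) has empty interior}` if and only if its strict support
`supp°(f) = {g : f(g) ≠ 0}` has empty interior in `G`.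

Elements of `C*_r(G)` are represented here faithfully as functions `G → ℂ`: since the reduced
C*-norm dominates the uniform norm, every element of `C*_r(G)` is (as a function on `G`) a
uniform limit of elements of `𝒞_c(G)`, which is the hypothesis `hf`.  (The unit space `X` is
open in `G` since `G` is étale, so "empty interior in `X`" and "empty interior in `G`"
coincide for `s(supp°(f)) ⊆ X`.) -/
theorem stmt8 [LocallyCompactSpace G] (D : GroupoidData G) [T2Space ↥D.X]
    (hXopen : IsOpen D.X) (hetale : D.IsEtale)
    (f : G → ℂ)
    (hf : ∀ ε : ℝ, 0 < ε → ∃ h ∈ D.CcSpan, ∀ g : G, ‖f g - h g‖ ≤ ε) :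
    interior (D.s '' {g : G | f g ≠ 0}) = ∅ ↔ interior {g : G | f g ≠ 0} = ∅ := by
  constructor
  · -- If `s(supp f)` has empty interior, so does `supp f`.
    intro hsing
    by_contra hne
    obtain ⟨g, hg⟩ : (interior {g : G | f g ≠ 0}).Nonempty :=
      Set.nonempty_iff_ne_empty.2 hne
    obtain ⟨U, hU, hgU⟩ := hetale g
    have hVo : IsOpen (D.s '' (interior {g : G | f g ≠ 0} ∩ U)) :=
      hU.2.2.2.2 _ Set.inter_subset_right (isOpen_interior.inter hU.1)
    have hsub : D.s '' (interior {g : G | f g ≠ 0} ∩ U) ⊆ D.s '' {g : G | f g ≠ 0} :=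
      Set.image_mono (Set.inter_subset_left.trans interior_subset)
    have : D.s g ∈ interior (D.s '' {g : G | f g ≠ 0}) :=
      interior_maximal hsub hVo ⟨g, ⟨hg, hgU⟩, rfl⟩
    rw [hsing] at this
    exact this
  · -- The hard direction.
    intro hsupp
    by_contra hne
    obtain ⟨w, hw⟩ : (interior (D.s '' {g : G | f g ≠ 0})).Nonempty :=
      Set.nonempty_iff_ne_empty.2 hne
    set W := interior (D.s '' {g : G | f g ≠ 0}) with hWdef
    have hWo : IsOpen W := isOpen_interior
    have hWsub : W ⊆ D.s '' {g : G | f g ≠ 0} := interior_subset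
    have hWX : W ⊆ D.X := fun x hx => by
      obtain ⟨g, -, rfl⟩ := hWsub hx
      exact D.s_mem g
    -- `W` is a locally compact Hausdorff space, hence a Baire space.
    haveI : T2Space ↥W := (Topology.IsEmbedding.inclusion hWX).t2Space
    haveI : LocallyCompactSpace ↥W := hWo.locallyCompactSpace
    haveI : Nonempty ↥W := ⟨⟨w, hw⟩⟩
    -- Decompose `W` into countably many level sets and apply Baire.
    set S : ℕ → Set G := fun n => {x | x ∈ W ∧ ∃ g, D.s g = x ∧ 1 / (n + 1 : ℝ) < ‖f g‖}
      with hSdef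
    have hFcover : ⋃ n, (Subtype.val ⁻¹' closure (S n) : Set ↥W) = Set.univ := by
      rw [Set.eq_univ_iff_forall]
      rintro ⟨x, hx⟩
      obtain ⟨g, hg, rfl⟩ := hWsub hx
      obtain ⟨n, hn⟩ := exists_nat_one_div_lt (norm_pos_iff.2 hg)
      exact Set.mem_iUnion.2 ⟨n, subset_closure ⟨hx, g, rfl, hn⟩⟩
    obtain ⟨n, ⟨x₀, hx₀W⟩, hx₀⟩ :=
      nonempty_interior_of_iUnion_of_closed
        (fun n => (isClosed_closure (s := S n)).preimage continuous_subtype_val) hFcover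
    set δ : ℝ := 1 / (n + 1 : ℝ) with hδdef
    have hδ : 0 < δ := by positivity
    -- Extract a nonempty open subset `W'` of `G` which is contained in `closure (S n)`.
    have hvalopen : IsOpenMap (Subtype.val : ↥W → G) := hWo.isOpenMap_subtype_val
    set W' : Set G := Subtype.val '' interior (Subtype.val ⁻¹' closure (S n) : Set ↥W)
      with hW'def
    have hW'o : IsOpen W' := hvalopen _ isOpen_interior
    have hW'ne : W'.Nonempty := ⟨x₀, ⟨x₀, hx₀W⟩, hx₀, rfl⟩
    have hW'cl : W' ⊆ closure (S n) := by
      rintro x ⟨z, hz, rfl⟩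
      exact interior_subset (s := Subtype.val ⁻¹' closure (S n)) hz
    -- Approximate `f` by `h ∈ 𝒞_c(G)` within `δ/4`.
    obtain ⟨h, hhmem, happrox⟩ := hf (δ / 4) (by positivity)
    obtain ⟨Dh, L, hDo, hDd, hDc, hLbis, hLsupp⟩ := ccSpan_structure D hhmem
    have hnormh : ∀ g : G, ‖f g‖ - δ / 4 ≤ ‖h g‖ := fun g => by
      have := norm_sub_norm_le (f g) (h g)
      have := happrox g
      linarith
    -- The set of arrows of big `f`-value over `W'`.
    set T : Set G := {g | D.s g ∈ W' ∧ δ < ‖f g‖} with hTdef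
    -- Cover `W'` by the closures of the `s`-images of `T ∩ U`, `U ∈ L`.
    have hcov : ∀ x ∈ W', ∃ C ∈ L.map (fun U => D.s '' (T ∩ U)), x ∈ closure C := by
      intro x hx
      have hxA : x ∈ closure (⋃ U ∈ {U | U ∈ L}, D.s '' (T ∩ U)) := by
        rw [mem_closure_iff]
        intro O hO hxO
        obtain ⟨x', ⟨hx'O, hx'W'⟩, hx'W, g, hsg, hfg⟩ :=
          mem_closure_iff.1 (hW'cl hx) (O ∩ W') (hO.inter hW'o) ⟨hxO, hx⟩
        have hgT : g ∈ T := ⟨hsg ▸ hx'W', hfg⟩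
        have hhg : h g ≠ 0 := by
          intro h0
          have := hnormh g
          rw [h0, norm_zero] at this
          linarith
        obtain ⟨U, hUL, hgU⟩ := hLsupp g hhg
        exact ⟨x', hx'O, Set.mem_biUnion hUL ⟨g, ⟨hgT, hgU⟩, hsg⟩⟩
      rw [(List.finite_toSet L).closure_biUnion] at hxA
      obtain ⟨U, hUL, hxU⟩ := Set.mem_iUnion₂.1 hxA
      exact ⟨D.s '' (T ∩ U), List.mem_map_of_mem hUL, hxU⟩
    obtain ⟨C, hCM, V₀, hV₀o, hV₀ne, hV₀cl⟩ := list_closure_cover _ W' hW'o hW'ne hcov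
    obtain ⟨U, hUL, rfl⟩ := List.mem_map.1 hCM
    have hUbis := hLbis U hUL
    set E : Set G := D.s '' (T ∩ U) with hEdef
    -- `V₀` meets `E`.
    obtain ⟨x₁, hx₁V₀, hx₁E⟩ : (V₀ ∩ E).Nonempty := by
      obtain ⟨v, hv⟩ := hV₀ne
      obtain ⟨y, hy1, hy2⟩ := mem_closure_iff.1 (hV₀cl hv) V₀ hV₀o hv
      exact ⟨y, hy1, hy2⟩
    obtain ⟨g₁, ⟨hg₁T, hg₁U⟩, hsg₁⟩ := hx₁E
    have hsUo : IsOpen (D.s '' U) := hUbis.2.2.2.2 U subset_rfl hUbis.1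
    set W₂ : Set G := V₀ ∩ D.s '' U with hW₂def
    have hW₂o : IsOpen W₂ := hV₀o.inter hsUo
    set V : Set G := U ∩ D.s ⁻¹' W₂ with hVdef
    have hVo : IsOpen V := hUbis.1.inter (hW₂o.preimage D.continuous_s)
    have hg₁V : g₁ ∈ V := ⟨hg₁U, by rw [Set.mem_preimage, hsg₁]; exact ⟨hx₁V₀, g₁, hg₁U, hsg₁⟩⟩
    -- `V ∩ Dh` is open nonempty; its `s`-image is open and contained in `V₀ ⊆ closure E`.
    have hVDne : (V ∩ Dh).Nonempty := by
      have := hDd.inter_open_nonempty V hVo ⟨g₁, hg₁V⟩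
      exact this.imp fun z hz => ⟨hz.1, hz.2⟩
    have hVDsub : V ∩ Dh ⊆ U := fun z hz => hz.1.1
    have hsVDo : IsOpen (D.s '' (V ∩ Dh)) :=
      hUbis.2.2.2.2 _ hVDsub (hVo.inter hDo)
    have hsVDne : (D.s '' (V ∩ Dh)).Nonempty := hVDne.image _
    have hsVDcl : D.s '' (V ∩ Dh) ⊆ closure E := by
      rintro y ⟨z, hz, rfl⟩
      exact hV₀cl (hz.1.2.1)
    -- Find a point of `E` in this open set, and identify arrows via injectivity of `s` on `U`.
    obtain ⟨y, hyim, hyE⟩ : (D.s '' (V ∩ Dh) ∩ E).Nonempty := by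
      obtain ⟨y, hy⟩ := hsVDne
      obtain ⟨z, hz1, hz2⟩ := mem_closure_iff.1 (hsVDcl hy) _ hsVDo hy
      exact ⟨z, hz1, hz2⟩
    obtain ⟨gs, hgsVD, hsgs⟩ := hyim
    obtain ⟨g₂, ⟨hg₂T, hg₂U⟩, hsg₂⟩ := hyE
    have hgseq : gs = g₂ := hUbis.2.2.1 (hVDsub hgsVD) hg₂U (by rw [hsgs, hsg₂])
    -- `gs` is a continuity point of `h` with `‖f gs‖ > δ`; conclude `f ≠ 0` near `gs`.
    have hfgs : δ < ‖f gs‖ := hgseq ▸ hg₂T.2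
    have hhgs : δ / 2 < ‖h gs‖ := by
      have := hnormh gs
      linarith
    have hcontgs : ContinuousAt h gs := hDc.continuousAt (hDo.mem_nhds hgsVD.2)
    have hcontn : ContinuousAt (fun g' => ‖h g'‖) gs := hcontgs.norm
    have hev : ∀ᶠ g' in nhds gs, δ / 2 < ‖h g'‖ :=
      hcontn.eventually_const_lt hhgs
    have hev' : ∀ᶠ g' in nhds gs, f g' ≠ 0 := by
      filter_upwards [hev] with g' hg'
      intro h0
      have h1 := happrox g'
      rw [h0, zero_sub, norm_neg] at h1
      linarith
    have : gs ∈ interior {g : G | f g ≠ 0} := mem_interior_iff_mem_nhds.2 hev'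
    rw [hsupp] at this
    exact this
end

section
/- Let G be an ample groupoid and R a ring. An element f of the Steinberg algebra RG lies in the singular ideal J_R = {f ∈ RG : supp°(f) has empty interior} if and only if s(supp°(f)) has empty interior in the unit space X. -/
variable {G : Type} [TopologicalSpace G]

/-- The Steinberg algebra `RG` (as an additive subgroup of functions `G → R`): the span of the
functions `c_U` taking a constant value `c ∈ R` on a compact open bisection `U` and `0`
elsewhere. -/
def GroupoidData.Steinberg (D : GroupoidData G) (R : Type) [NonUnitalRing R] :
    AddSubgroup (G → R) :=
  AddSubgroup.closure {f : G → R | ∃ (c : R) (U : Set G),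
    IsCompact U ∧ D.IsOpenBisection U ∧ f = Set.indicator U (fun _ => c)}

lemma rep_lemma (D : GroupoidData G) (R : Type) [NonUnitalRing R] (f : G → R)
    (hf : f ∈ D.Steinberg R) :
    ∃ (n : ℕ) (c : Fin n → R) (U : Fin n → Set G), (∀ i, D.IsOpenBisection (U i)) ∧
      f = ∑ i, (U i).indicator (fun _ => c i) := by
  classical
  refine AddSubgroup.closure_induction ?_ ?_ ?_ ?_ hf
  · rintro x ⟨c, U, -, hU, rfl⟩
    exact ⟨1, fun _ => c, fun _ => U, fun _ => hU, by simp⟩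
  · exact ⟨0, Fin.elim0, Fin.elim0, fun i => i.elim0, by simp⟩
  · rintro x y - - ⟨n, c, U, hU, rfl⟩ ⟨m, d, V, hV, rfl⟩
    refine ⟨n + m, Fin.append c d, Fin.append U V, ?_, ?_⟩
    · intro i
      refine Fin.addCases (motive := fun i => D.IsOpenBisection (Fin.append U V i)) ?_ ?_ i
      · intro j; rw [Fin.append_left]; exact hU j
      · intro j; rw [Fin.append_right]; exact hV j
    · rw [Fin.sum_univ_add]
      congr 1 <;> { apply Finset.sum_congr rfl; intro i _; simp [Fin.append_left, Fin.append_right] }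
  · rintro x - ⟨n, c, U, hU, rfl⟩
    refine ⟨n, fun i => -c i, U, hU, ?_⟩
    funext g
    simp only [Pi.neg_apply, Finset.sum_apply, Set.indicator_apply, ← Finset.sum_neg_distrib]
    refine Finset.sum_congr rfl fun i _ => ?_
    split <;> simp

/-- Let `G` be an ample groupoid (étale, with totally disconnected Hausdorff
unit space) and `R` a (possibly non-unital, non-commutative) ring.  An element `f` of the
Steinberg algebra `RG` lies in the singular ideal `J_R = {f : supp°(f) has empty interior}`
if and only if `s(supp°(f))` has empty interior. -/
theorem stmt9 [LocallyCompactSpace G] (D : GroupoidData G) [T2Space ↥D.X]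
    [TotallyDisconnectedSpace ↥D.X] (hXopen : IsOpen D.X) (hetale : D.IsEtale)
    (R : Type) [NonUnitalRing R] (f : G → R) (hf : f ∈ D.Steinberg R) :
    interior {g : G | f g ≠ 0} = ∅ ↔ interior (D.s '' {g : G | f g ≠ 0}) = ∅ := by
  classical
  constructor
  · -- hard direction
    intro hsupp
    by_contra hne
    obtain ⟨x₀, hx₀W⟩ := Set.nonempty_iff_ne_empty.mpr hne
    obtain ⟨n, c, U, hU, hfU⟩ := rep_lemma D R f hf
    set W := interior (D.s '' {g : G | f g ≠ 0}) with hWdef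
    -- the "incidence pattern" at a point
    set P : G → Finset (Fin n × Fin n) :=
      fun x => Finset.univ.filter (fun p => ∃ g, g ∈ U p.1 ∧ g ∈ U p.2 ∧ D.s g = x) with hPdef
    have hPopen : ∀ p : Fin n × Fin n, IsOpen {x | p ∈ P x} := by
      intro p
      have : {x | p ∈ P x} = D.s '' (U p.1 ∩ U p.2) := by
        ext x
        simp only [hPdef, Finset.mem_filter, Finset.mem_univ, true_and, Set.mem_setOf_eq,
          Set.mem_image, Set.mem_inter_iff]
        tauto
      rw [this]
      exact (hU p.1).2.2.2.2 _ Set.inter_subset_left ((hU p.1).1.inter (hU p.2).1)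
    -- pick a point of W with maximal pattern
    have hbdd : BddAbove {k | ∃ x ∈ W, (P x).card = k} := by
      refine ⟨Fintype.card (Fin n × Fin n), ?_⟩
      rintro k ⟨x, -, rfl⟩
      exact Finset.card_le_univ _
    have hmem : sSup {k | ∃ x ∈ W, (P x).card = k} ∈ {k | ∃ x ∈ W, (P x).card = k} :=
      Nat.sSup_mem ⟨(P x₀).card, x₀, hx₀W, rfl⟩ hbdd
    obtain ⟨x₁, hx₁W, hx₁card⟩ := hmem
    have hmax : ∀ x ∈ W, (P x).card ≤ (P x₁).card := by
      intro x hx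
      rw [hx₁card]
      exact le_csSup hbdd ⟨x, hx, rfl⟩
    -- the shrunk open set where the pattern is constant
    set W' : Set G := W ∩ ⋂ p ∈ P x₁, {x | p ∈ P x} with hW'def
    have hW'open : IsOpen W' :=
      isOpen_interior.inter (isOpen_biInter_finset fun p _ => hPopen p)
    have hx₁W' : x₁ ∈ W' := by
      refine ⟨hx₁W, ?_⟩
      simp only [Set.mem_iInter]
      exact fun p hp => hp
    have hPeq : ∀ x ∈ W', P x = P x₁ := by
      rintro x ⟨hxW, hxI⟩
      refine (Finset.eq_of_subset_of_card_le ?_ (hmax x hxW)).symm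
      intro p hp
      simp only [Set.mem_iInter] at hxI
      exact hxI p hp
    -- a nonzero point over x₁
    have hx₁supp : x₁ ∈ D.s '' {g : G | f g ≠ 0} := interior_subset hx₁W
    obtain ⟨g₀, hg₀, hsg₀⟩ := hx₁supp
    have hfeval : ∀ g : G, f g = ∑ j ∈ Finset.univ.filter (fun j => g ∈ U j), c j := by
      intro g
      rw [hfU, Finset.sum_apply, Finset.sum_filter]
      exact Finset.sum_congr rfl fun i _ => by rw [Set.indicator_apply]
    obtain ⟨i₀, hi₀⟩ : ∃ i, g₀ ∈ U i := by
      by_contra h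
      push_neg at h
      apply hg₀
      rw [hfeval]
      have : Finset.univ.filter (fun j => g₀ ∈ U j) = ∅ := by
        refine Finset.filter_eq_empty_iff.mpr fun j _ => h j
      rw [this, Finset.sum_empty]
    -- key: the index set is determined by the pattern on W'
    have key : ∀ g, g ∈ U i₀ → D.s g ∈ W' →
        Finset.univ.filter (fun j => g ∈ U j) =
        Finset.univ.filter (fun j => (i₀, j) ∈ P x₁) := by
      intro g hgi hgW
      ext j
      simp only [Finset.mem_filter, Finset.mem_univ, true_and]
      constructor
      · intro hgj
        rw [← hPeq (D.s g) hgW]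
        simp only [hPdef, Finset.mem_filter, Finset.mem_univ, true_and]
        exact ⟨g, hgi, hgj, rfl⟩
      · intro hp
        rw [← hPeq (D.s g) hgW] at hp
        simp only [hPdef, Finset.mem_filter, Finset.mem_univ, true_and] at hp
        obtain ⟨h, hh1, hh2, hh3⟩ := hp
        rwa [(hU i₀).2.2.1 hh1 hgi hh3] at hh2
    have hsg₀W' : D.s g₀ ∈ W' := by rw [hsg₀]; exact hx₁W'
    -- the open set inside the support
    set V : Set G := U i₀ ∩ D.s ⁻¹' W' with hVdef
    have hVopen : IsOpen V := (hU i₀).1.inter (hW'open.preimage D.continuous_s)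
    have hVsub : V ⊆ {g : G | f g ≠ 0} := by
      rintro g ⟨hgi, hgW⟩
      have : f g = f g₀ := by
        rw [hfeval g, hfeval g₀, key g hgi hgW, key g₀ hi₀ hsg₀W']
      simpa [this] using hg₀
    have : V ⊆ interior {g : G | f g ≠ 0} := interior_maximal hVsub hVopen
    rw [hsupp] at this
    exact this ⟨hi₀, hsg₀W'⟩
  · -- easy direction
    intro hs
    by_contra hne
    obtain ⟨g, hg⟩ := Set.nonempty_iff_ne_empty.mpr hne
    obtain ⟨Ub, hUb, hgU⟩ := hetale g
    have hVopen : IsOpen (interior {g : G | f g ≠ 0} ∩ Ub) := isOpen_interior.inter hUb.1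
    have himg : IsOpen (D.s '' (interior {g : G | f g ≠ 0} ∩ Ub)) :=
      hUb.2.2.2.2 _ Set.inter_subset_right hVopen
    have hsub : D.s '' (interior {g : G | f g ≠ 0} ∩ Ub) ⊆
        interior (D.s '' {g : G | f g ≠ 0}) :=
      interior_maximal (Set.image_mono (Set.inter_subset_left.trans interior_subset)) himg
    rw [hs] at hsub
    exact hsub ⟨g, ⟨hg, hgU⟩, rfl⟩
end

section
/- Let G be an ample groupoid, R a ring, and f ∈ RG. Suppose there exist open bisections V₁,…,V_n ⊆ G and a compact set K ⊆ V₁ ∪ ⋯ ∪ V_n with supp°(f) ⊆ K. Then there exist f₁,…,f_n with f_i ∈ C_c(V_i, R) (locally constant compactly supported functions V_i → R, extended by zero) such that f = f₁ + ⋯ + f_n. -/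
variable {G : Type} [TopologicalSpace G]

/-- `f : G → R` is (the extension by zero of) a locally constant compactly supported function
on the open set `U`, i.e. an element of `C_c(U, R)`. -/
def MemCcR (R : Type) [Zero R] (U : Set G) (f : G → R) : Prop :=
  (∀ g ∈ U, ∃ W : Set G, IsOpen W ∧ g ∈ W ∧ ∀ h ∈ W ∩ U, f h = f g) ∧
  (∀ g ∉ U, f g = 0) ∧
  ∃ K : Set G, IsCompact K ∧ K ⊆ U ∧ ∀ g, f g ≠ 0 → g ∈ K

open Set

/-- `h` is locally constant with "clopen-compact" witnesses on `U` and vanishes outside `U`. -/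
def LCS (R : Type) [Zero R] (U : Set G) (h : G → R) : Prop :=
  (∀ g ∉ U, h g = 0) ∧
  ∀ g ∈ U, ∃ Q : Set G, Q ⊆ U ∧ IsOpen Q ∧ IsCompact Q ∧ g ∈ Q ∧ ∀ g' ∈ Q, h g' = h g

lemma t2_of_injOn (D : GroupoidData G) [T2Space ↥D.X] {U : Set G}
    (hinj : Set.InjOn D.s U) : T2Space ↥U := by
  refine T2Space.of_injective_continuous
    (f := fun u : ↥U => (⟨D.s u, D.s_mem u⟩ : ↥D.X)) ?_ ?_
  · intro a b hab
    exact Subtype.ext (hinj a.2 b.2 (congrArg Subtype.val hab))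
  · exact Continuous.subtype_mk (D.continuous_s.comp continuous_subtype_val) _

lemma td_of_injOn (D : GroupoidData G) [TotallyDisconnectedSpace ↥D.X] {U : Set G}
    (hinj : Set.InjOn D.s U) : TotallyDisconnectedSpace ↥U := by
  constructor
  refine isTotallyDisconnected_of_image
    (f := fun u : ↥U => (⟨D.s u, D.s_mem u⟩ : ↥D.X))
    (Continuous.continuousOn
      (Continuous.subtype_mk (D.continuous_s.comp continuous_subtype_val) _)) ?_
    (isTotallyDisconnected_of_totallyDisconnectedSpace _)
  intro a b hab
  exact Subtype.ext (hinj a.2 b.2 (congrArg Subtype.val hab))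

lemma isOpen_diff_of_compact (D : GroupoidData G) [T2Space ↥D.X] {U P : Set G}
    (hUo : IsOpen U) (hinj : Set.InjOn D.s U) (hP : IsCompact P) (hPU : P ⊆ U) :
    IsOpen (U \ P) := by
  haveI := t2_of_injOn D hinj
  have hemb : Topology.IsEmbedding ((↑) : ↥U → G) := Topology.IsEmbedding.subtypeVal
  have h1 : IsCompact (((↑) : ↥U → G) ⁻¹' P) := by
    rw [hemb.isCompact_iff]
    have himg : ((↑) : ↥U → G) '' (((↑) : ↥U → G) ⁻¹' P) = P := by
      rw [Set.image_preimage_eq_inter_range, Subtype.range_coe]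
      exact Set.inter_eq_left.mpr hPU
    rw [himg]; exact hP
  have h3 : IsOpen (((↑) : ↥U → G) '' ((((↑) : ↥U → G) ⁻¹' P)ᶜ)) :=
    hUo.isOpenMap_subtype_val _ h1.isClosed.isOpen_compl
  have heq : ((↑) : ↥U → G) '' ((((↑) : ↥U → G) ⁻¹' P)ᶜ) = U \ P := by
    ext g
    constructor
    · rintro ⟨u, hu, rfl⟩; exact ⟨u.2, hu⟩
    · rintro ⟨hgU, hgP⟩; exact ⟨⟨g, hgU⟩, hgP, rfl⟩
  rwa [heq] at h3

lemma exists_clopen_nbhd (D : GroupoidData G) [T2Space ↥D.X]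
    [TotallyDisconnectedSpace ↥D.X] {U : Set G}
    (hUc : IsCompact U) (hUo : IsOpen U) (hinj : Set.InjOn D.s U)
    {g : G} (hg : g ∈ U) {W : Set G} (hW : IsOpen W) (hgW : g ∈ W) :
    ∃ Q : Set G, g ∈ Q ∧ Q ⊆ U ∧ Q ⊆ W ∧ IsOpen Q ∧ IsCompact Q := by
  haveI := t2_of_injOn D hinj
  haveI := td_of_injOn D hinj
  haveI : CompactSpace ↥U := isCompact_iff_compactSpace.mp hUc
  obtain ⟨C, hC, hgC, hCW⟩ := compact_exists_isClopen_in_isOpen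
    (U := ((↑) : ↥U → G) ⁻¹' W) (hW.preimage continuous_subtype_val)
    (show (⟨g, hg⟩ : ↥U) ∈ _ from hgW)
  refine ⟨((↑) : ↥U → G) '' C, ⟨⟨g, hg⟩, hgC, rfl⟩, ?_, ?_, ?_, ?_⟩
  · rintro _ ⟨u, _, rfl⟩; exact u.2
  · rintro _ ⟨u, hu, rfl⟩; exact hCW hu
  · exact hUo.isOpenMap_subtype_val _ hC.2
  · exact (hC.1.isCompact).image continuous_subtype_val

lemma LCS_zero (D : GroupoidData G) [T2Space ↥D.X] [TotallyDisconnectedSpace ↥D.X]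
    {R : Type} [NonUnitalRing R] {U : Set G}
    (hUc : IsCompact U) (hUo : IsOpen U) (hinj : Set.InjOn D.s U) :
    LCS R U (0 : G → R) := by
  refine ⟨fun g _ => rfl, fun g hg => ?_⟩
  obtain ⟨Q, hgQ, hQU, _, hQo, hQc⟩ :=
    exists_clopen_nbhd D hUc hUo hinj hg isOpen_univ (Set.mem_univ g)
  exact ⟨Q, hQU, hQo, hQc, hgQ, fun _ _ => rfl⟩

lemma LCS_neg {R : Type} [NonUnitalRing R] {U : Set G} {h : G → R}
    (hh : LCS R U h) : LCS R U (-h) := by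
  refine ⟨fun g hg => by simp [hh.1 g hg], fun g hg => ?_⟩
  obtain ⟨Q, hQU, hQo, hQc, hgQ, hconst⟩ := hh.2 g hg
  exact ⟨Q, hQU, hQo, hQc, hgQ, fun g' hg' => by simp [hconst g' hg']⟩

lemma LCS_add (D : GroupoidData G) [T2Space ↥D.X] {R : Type} [NonUnitalRing R]
    {U : Set G} (hUo : IsOpen U) (hinj : Set.InjOn D.s U) {h1 h2 : G → R}
    (hh1 : LCS R U h1) (hh2 : LCS R U h2) : LCS R U (h1 + h2) := by
  refine ⟨fun g hg => by simp [hh1.1 g hg, hh2.1 g hg], fun g hg => ?_⟩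
  obtain ⟨Q1, hQ1U, hQ1o, hQ1c, hgQ1, hc1⟩ := hh1.2 g hg
  obtain ⟨Q2, hQ2U, hQ2o, hQ2c, hgQ2, hc2⟩ := hh2.2 g hg
  have hcap : Q1 ∩ Q2 = Q1 \ (U \ Q2) := by
    ext x
    simp only [Set.mem_inter_iff, Set.mem_diff]
    constructor
    · rintro ⟨hx1, hx2⟩; exact ⟨hx1, fun hx => hx.2 hx2⟩
    · rintro ⟨hx1, hx⟩
      refine ⟨hx1, ?_⟩
      by_contra hn
      exact hx ⟨hQ1U hx1, hn⟩
  refine ⟨Q1 ∩ Q2, fun x hx => hQ1U hx.1, hQ1o.inter hQ2o, ?_, ⟨hgQ1, hgQ2⟩, ?_⟩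
  · rw [hcap]
    exact hQ1c.diff (isOpen_diff_of_compact D hUo hinj hQ2c hQ2U)
  · intro g' hg'
    simp [hc1 g' hg'.1, hc2 g' hg'.2]

lemma LCS_indicator (D : GroupoidData G) [T2Space ↥D.X] {R : Type} [NonUnitalRing R]
    {U P : Set G} (hUc : IsCompact U) (hUo : IsOpen U) (hinj : Set.InjOn D.s U)
    (hPo : IsOpen P) (hPc : IsCompact P) (hPU : P ⊆ U) (c : R) :
    LCS R U (Set.indicator P fun _ => c) := by
  refine ⟨fun g hg => Set.indicator_of_notMem (fun hgP => hg (hPU hgP)) _, fun g hg => ?_⟩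
  by_cases hgP : g ∈ P
  · refine ⟨P, hPU, hPo, hPc, hgP, fun g' hg' => ?_⟩
    rw [Set.indicator_of_mem hg' , Set.indicator_of_mem hgP]
  · refine ⟨U \ P, Set.diff_subset, isOpen_diff_of_compact D hUo hinj hPc hPU,
      hUc.diff hPo, ⟨hg, hgP⟩, fun g' hg' => ?_⟩
    rw [Set.indicator_of_notMem hg'.2, Set.indicator_of_notMem hgP]

lemma LCS_sum (D : GroupoidData G) [T2Space ↥D.X] [TotallyDisconnectedSpace ↥D.X]
    {R : Type} [NonUnitalRing R] {U : Set G}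
    (hUc : IsCompact U) (hUo : IsOpen U) (hinj : Set.InjOn D.s U)
    {ι : Type} (s : Finset ι) (F : ι → G → R) (hF : ∀ k ∈ s, LCS R U (F k)) :
    LCS R U (∑ k ∈ s, F k) :=
  Finset.sum_induction F (LCS R U) (fun _ _ ha hb => LCS_add D hUo hinj ha hb)
    (LCS_zero D hUc hUo hinj) hF

lemma MemCcR_zero {R : Type} [NonUnitalRing R] (V : Set G) : MemCcR R V (0 : G → R) := by
  refine ⟨fun g _ => ⟨Set.univ, isOpen_univ, trivial, fun _ _ => rfl⟩, fun g _ => rfl,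
    ∅, isCompact_empty, Set.empty_subset _, fun g hg => absurd rfl hg⟩

lemma MemCcR_add {R : Type} [NonUnitalRing R] {V : Set G} {f1 f2 : G → R}
    (h1 : MemCcR R V f1) (h2 : MemCcR R V f2) : MemCcR R V (f1 + f2) := by
  obtain ⟨hl1, hv1, K1, hK1c, hK1V, hK1⟩ := h1
  obtain ⟨hl2, hv2, K2, hK2c, hK2V, hK2⟩ := h2
  refine ⟨fun g hg => ?_, fun g hg => by simp [hv1 g hg, hv2 g hg], K1 ∪ K2,
    hK1c.union hK2c, Set.union_subset hK1V hK2V, fun g hg => ?_⟩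
  · obtain ⟨W1, hW1o, hgW1, hc1⟩ := hl1 g hg
    obtain ⟨W2, hW2o, hgW2, hc2⟩ := hl2 g hg
    refine ⟨W1 ∩ W2, hW1o.inter hW2o, ⟨hgW1, hgW2⟩, fun x hx => ?_⟩
    simp [hc1 x ⟨hx.1.1, hx.2⟩, hc2 x ⟨hx.1.2, hx.2⟩]
  · by_cases hg1 : f1 g ≠ 0
    · exact Or.inl (hK1 g hg1)
    · push_neg at hg1
      refine Or.inr (hK2 g ?_)
      intro hg2
      exact hg (by simp [Pi.add_apply, hg1, hg2])

lemma MemCcR_indicator (D : GroupoidData G) [T2Space ↥D.X] {R : Type} [NonUnitalRing R]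
    {V P : Set G} (hVo : IsOpen V) (hinj : Set.InjOn D.s V)
    (hPo : IsOpen P) (hPc : IsCompact P) (hPV : P ⊆ V) (c : R) :
    MemCcR R V (Set.indicator P fun _ => c) := by
  refine ⟨fun g hg => ?_, fun g hg => Set.indicator_of_notMem (fun hgP => hg (hPV hgP)) _,
    P, hPc, hPV, fun g hg => ?_⟩
  · by_cases hgP : g ∈ P
    · refine ⟨P, hPo, hgP, fun x hx => ?_⟩
      rw [Set.indicator_of_mem hx.1, Set.indicator_of_mem hgP]
    · refine ⟨V \ P, isOpen_diff_of_compact D hVo hinj hPc hPV, ⟨hg, hgP⟩, fun x hx => ?_⟩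
      rw [Set.indicator_of_notMem hx.1.2, Set.indicator_of_notMem hgP]
  · by_contra hgP
    exact hg (Set.indicator_of_notMem hgP _)

lemma MemCcR_sum {R : Type} [NonUnitalRing R] {V : Set G}
    {ι : Type} (s : Finset ι) (F : ι → G → R) (hF : ∀ k ∈ s, MemCcR R V (F k)) :
    MemCcR R V (∑ k ∈ s, F k) :=
  Finset.sum_induction F (MemCcR R V) (fun _ _ ha hb => MemCcR_add ha hb)
    (MemCcR_zero V) hF

lemma steinberg_repr (D : GroupoidData G) {R : Type} [NonUnitalRing R] {f : G → R}
    (hf : f ∈ D.Steinberg R) :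
    ∃ (m : ℕ) (Us : Fin m → Set G) (hs : Fin m → G → R),
      (∀ j, IsCompact (Us j) ∧ D.IsOpenBisection (Us j) ∧ LCS R (Us j) (hs j)) ∧
      f = ∑ j, hs j := by
  induction hf using AddSubgroup.closure_induction with
  | mem x hx =>
    obtain ⟨c, U, hUc, hUb, rfl⟩ := hx
    refine ⟨1, fun _ => U, fun _ => Set.indicator U fun _ => c, fun j => ⟨hUc, hUb, ?_⟩,
      (by simp)⟩
    refine ⟨fun g hg => Set.indicator_of_notMem hg _, fun g hg => ?_⟩
    exact ⟨U, le_refl U, hUb.1, hUc, hg, fun g' hg' => by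
      simp only []
      rw [Set.indicator_of_mem hg', Set.indicator_of_mem (show g ∈ U from hg)]⟩
  | zero =>
    exact ⟨0, Fin.elim0, Fin.elim0, fun j => j.elim0, by simp⟩
  | add x y hx hy ihx ihy =>
    obtain ⟨m1, Us1, hs1, hp1, rfl⟩ := ihx
    obtain ⟨m2, Us2, hs2, hp2, rfl⟩ := ihy
    refine ⟨m1 + m2, Fin.append Us1 Us2, Fin.append hs1 hs2, ?_, ?_⟩
    · intro j
      refine Fin.addCases (fun j1 => ?_) (fun j2 => ?_) j
      · simpa [Fin.append_left] using hp1 j1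
      · simpa [Fin.append_right] using hp2 j2
    · rw [Fin.sum_univ_add]
      simp [Fin.append_left, Fin.append_right]
  | neg x hx ihx =>
    obtain ⟨m, Us, hs, hp, rfl⟩ := ihx
    refine ⟨m, Us, fun j => -(hs j), fun j => ⟨(hp j).1, (hp j).2.1, LCS_neg (hp j).2.2⟩, ?_⟩
    rw [← Finset.sum_neg_distrib]

lemma main_split (D : GroupoidData G) [T2Space ↥D.X] [TotallyDisconnectedSpace ↥D.X]
    {R : Type} [NonUnitalRing R] {n : ℕ} {V : Fin n → Set G}
    (hV : ∀ i, D.IsOpenBisection (V i)) :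
    ∀ (m : ℕ) (Us : Fin m → Set G) (hs : Fin m → G → R),
      (∀ j, IsCompact (Us j) ∧ D.IsOpenBisection (Us j) ∧ LCS R (Us j) (hs j)) →
      ∀ (K : Set G), IsCompact K → K ⊆ ⋃ i, V i → (∀ g, (∑ j, hs j) g ≠ 0 → g ∈ K) →
      ∃ fs : Fin n → G → R, (∀ i, MemCcR R (V i) (fs i)) ∧ (∑ j, hs j) = ∑ i, fs i := by
  intro m
  induction m with
  | zero =>
    intro Us hs _ K _ _ _
    exact ⟨fun _ => 0, fun i => MemCcR_zero _, by simp⟩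
  | succ m ih =>
    intro Us hs hprops K hKc hKV hsupp
    classical
    set U : Set G := Us 0 with hU
    set h : G → R := hs 0 with hh
    obtain ⟨hUc, hUb, hLCS⟩ := hprops 0
    set Us' : Fin m → Set G := fun j => Us j.succ with hUs'
    set hs' : Fin m → G → R := fun j => hs j.succ with hhs'
    have hprops' : ∀ j, IsCompact (Us' j) ∧ D.IsOpenBisection (Us' j) ∧ LCS R (Us' j) (hs' j) :=
      fun j => hprops j.succ
    set F : G → R := ∑ j, hs' j with hF
    have hsum : (∑ j : Fin (m + 1), hs j) = h + F := Fin.sum_univ_succ hs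
    -- selection of clopen tagged neighborhoods
    have hsel : ∀ u : ↥U, ∃ (Q : Set G) (o : Option (Fin n ⊕ Fin m)),
        ↑u ∈ Q ∧ Q ⊆ U ∧ IsOpen Q ∧ IsCompact Q ∧ (∀ g' ∈ Q, h g' = h ↑u) ∧
        (match o with
          | some (Sum.inl i) => Q ⊆ V i
          | some (Sum.inr j) => Q ⊆ Us' j
          | none => h ↑u = 0) := by
      rintro ⟨g, hg⟩
      obtain ⟨Q0, hQ0U, hQ0o, hQ0c, hgQ0, hQ0const⟩ := hLCS.2 g hg
      by_cases hcase : ∃ i, g ∈ V i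
      · obtain ⟨i, hi⟩ := hcase
        obtain ⟨Q, hgQ, hQU, hQW, hQo, hQc⟩ := exists_clopen_nbhd D hUc hUb.1 hUb.2.2.1 hg
          (((hV i).1).inter hQ0o) (show g ∈ V i ∩ Q0 from ⟨hi, hgQ0⟩)
        exact ⟨Q, some (Sum.inl i), hgQ, hQU, hQo, hQc,
          fun g' hg' => hQ0const g' (hQW hg').2, fun x hx => (hQW hx).1⟩
      · by_cases hcase2 : ∃ j, g ∈ Us' j
        · obtain ⟨j, hj⟩ := hcase2
          obtain ⟨Q, hgQ, hQU, hQW, hQo, hQc⟩ := exists_clopen_nbhd D hUc hUb.1 hUb.2.2.1 hg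
            (((hprops' j).2.1.1).inter hQ0o) (show g ∈ Us' j ∩ Q0 from ⟨hj, hgQ0⟩)
          exact ⟨Q, some (Sum.inr j), hgQ, hQU, hQo, hQc,
            fun g' hg' => hQ0const g' (hQW hg').2, fun x hx => (hQW hx).1⟩
        · refine ⟨Q0, none, hgQ0, hQ0U, hQ0o, hQ0c, hQ0const, ?_⟩
          by_contra hne
          have hFg : F g = 0 := by
            by_contra hFne
            have hex : ∃ j, hs' j g ≠ 0 := by
              by_contra hall
              push_neg at hall
              apply hFne
              rw [hF, Finset.sum_apply]
              exact Finset.sum_eq_zero fun j _ => hall j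
            obtain ⟨j, hj⟩ := hex
            exact hcase2 ⟨j, by_contra fun hnot => hj ((hprops' j).2.2.1 g hnot)⟩
          have hne2 : (∑ j : Fin (m + 1), hs j) g ≠ 0 := by
            rw [hsum, Pi.add_apply, hFg, add_zero]
            exact hne
          exact hcase (by simpa using hKV (hsupp g hne2))
    choose Qf σf hmem hsubU hopen hcpt hconst htag using hsel
    -- finite subcover
    have hcover : U ⊆ ⋃ u : ↥U, Qf u := fun g hg => Set.mem_iUnion.mpr ⟨⟨g, hg⟩, hmem ⟨g, hg⟩⟩
    obtain ⟨t, ht⟩ := hUc.elim_finite_subcover (fun u : ↥U => Qf u) (fun u => hopen u) hcover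
    set L := t.toList with hL
    set p := L.length with hp
    set gk : Fin p → ↥U := fun k => L.get k with hgk
    set Q : Fin p → Set G := fun k => Qf (gk k) with hQ
    set v : Fin p → R := fun k => h ↑(gk k) with hv
    have hcov' : ∀ g ∈ U, ∃ k : Fin p, g ∈ Q k := by
      intro g hg
      obtain ⟨u, hut, hu⟩ : ∃ u ∈ t, g ∈ Qf u := by simpa using ht hg
      obtain ⟨k, hk⟩ := List.mem_iff_get.mp (Finset.mem_toList.mpr hut)
      exact ⟨k, by rw [hQ]; simp only [hgk]; rw [show L.get k = u from hk]; exact hu⟩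
    -- disjointification
    set Rk : Fin p → Set G :=
      fun k => Q k ∩ ⋂ l ∈ Finset.univ.filter (· < k), (U \ Q l) with hRk
    have hRopen : ∀ k, IsOpen (Rk k) := fun k =>
      (hopen _).inter (isOpen_biInter_finset fun l _ =>
        isOpen_diff_of_compact D hUb.1 hUb.2.2.1 (hcpt _) (hsubU _))
    have hRsub : ∀ k, Rk k ⊆ Q k := fun k => Set.inter_subset_left
    have hRc : ∀ k, IsCompact (Rk k) := by
      intro k
      have heq : Rk k = U \ ((U \ Q k) ∪ ⋃ l ∈ Finset.univ.filter (· < k), Q l) := by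
        ext g
        constructor
        · intro hgm
          have hgQ : g ∈ Q k := hgm.1
          have hrest : ∀ l ∈ Finset.univ.filter (· < k), g ∈ U \ Q l :=
            Set.mem_iInter₂.mp hgm.2
          refine ⟨hsubU _ hgQ, ?_⟩
          rintro (hd | hu)
          · exact hd.2 hgQ
          · obtain ⟨l, hl, hgl⟩ := Set.mem_iUnion₂.mp hu
            exact (hrest l hl).2 hgl
        · rintro ⟨hgU, hnot⟩
          have hgQ : g ∈ Q k := by
            by_contra hgQ
            exact hnot (Or.inl ⟨hgU, hgQ⟩)
          refine ⟨hgQ, Set.mem_iInter₂.mpr fun l hl => ⟨hgU, fun hgl => ?_⟩⟩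
          exact hnot (Or.inr (Set.mem_iUnion₂.mpr ⟨l, hl, hgl⟩))
      rw [heq]
      exact hUc.diff (((isOpen_diff_of_compact D hUb.1 hUb.2.2.1 (hcpt _) (hsubU _))).union
        (isOpen_biUnion fun l _ => hopen _))
    have hkey : ∀ g ∈ U, ∃ k₀ : Fin p, g ∈ Rk k₀ ∧ (∀ k, k ≠ k₀ → g ∉ Rk k) ∧ h g = v k₀ := by
      intro g hg
      obtain ⟨k1, hk1⟩ := hcov' g hg
      have hne : (Finset.univ.filter (fun k => g ∈ Q k)).Nonempty := ⟨k1, by simp [hk1]⟩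
      set k₀ := (Finset.univ.filter (fun k => g ∈ Q k)).min' hne with hk₀
      have hk₀Q : g ∈ Q k₀ :=
        (Finset.mem_filter.mp (Finset.min'_mem _ hne)).2
      have hmin : ∀ k, g ∈ Q k → k₀ ≤ k := fun k hk => Finset.min'_le _ _ (by simp [hk])
      refine ⟨k₀, ⟨hk₀Q, ?_⟩, ?_, (hconst (gk k₀) g hk₀Q)⟩
      · refine Set.mem_iInter₂.mpr fun l hl => ?_
        have hlk : l < k₀ := (Finset.mem_filter.mp hl).2
        exact ⟨hg, fun hQl => absurd (hmin l hQl) (not_le.mpr hlk)⟩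
      · intro k hk hgRk
        rcases lt_or_gt_of_ne hk with hlt | hgt
        · exact absurd (hmin k (hRsub k hgRk)) (not_le.mpr hlt)
        · have h2 : g ∈ U \ Q k₀ :=
            (Set.mem_iInter₂.mp hgRk.2) k₀ (Finset.mem_filter.mpr ⟨Finset.mem_univ _, hgt⟩)
          exact h2.2 hk₀Q
    set term : Fin p → G → R := fun k => Set.indicator (Rk k) (fun _ => v k) with hterm
    have hident : h = ∑ k, term k := by
      funext g
      rw [Finset.sum_apply]
      by_cases hg : g ∈ U
      · obtain ⟨k₀, hgk₀, huniq, hval⟩ := hkey g hg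
        rw [Finset.sum_eq_single k₀]
        · rw [hterm]
          simp only []
          rw [Set.indicator_of_mem hgk₀]
          exact hval
        · intro k _ hk
          exact Set.indicator_of_notMem (huniq k hk) _
        · intro habs
          exact absurd (Finset.mem_univ k₀) habs
      · rw [show h g = 0 from hLCS.1 g hg]
        symm
        apply Finset.sum_eq_zero
        intro k _
        exact Set.indicator_of_notMem (fun hgR => hg (hsubU (gk k) (hRsub k hgR))) _
    set σ : Fin p → Option (Fin n ⊕ Fin m) := fun k => σf (gk k) with hσdef
    set goods : Fin n → G → R :=
      fun i => ∑ k ∈ Finset.univ.filter (fun k => σ k = some (Sum.inl i)), term k with hgoods_def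
    set absf : Fin m → G → R :=
      fun j => ∑ k ∈ Finset.univ.filter (fun k => σ k = some (Sum.inr j)), term k with habs_def
    have hsplit : (∑ k, term k) = (∑ i, goods i) + ∑ j, absf j := by
      have h1 := Finset.sum_fiberwise Finset.univ σ term
      rw [← h1, Fintype.sum_option]
      have hnone : (∑ k ∈ Finset.univ.filter (fun k => σ k = none), term k) = 0 := by
        apply Finset.sum_eq_zero
        intro k hk
        have hσk : σ k = none := (Finset.mem_filter.mp hk).2
        have ht := htag (gk k)
        rw [show σf (gk k) = none from hσk] at ht
        have hvz : v k = 0 := ht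
        funext g
        simp [hterm, Set.indicator_apply, hvz]
      rw [hnone, zero_add, Fintype.sum_sum_type]
    set hs'' : Fin m → G → R := fun j => hs' j + absf j with hhs''
    have hdec : (∑ j, hs'' j) = F + ∑ j, absf j := by
      rw [hhs'', hF]
      exact Finset.sum_add_distrib
    have hprops'' : ∀ j, IsCompact (Us' j) ∧ D.IsOpenBisection (Us' j) ∧ LCS R (Us' j) (hs'' j) := by
      intro j
      obtain ⟨hc, hb, hl⟩ := hprops' j
      refine ⟨hc, hb, LCS_add D hb.1 hb.2.2.1 hl ?_⟩
      apply LCS_sum D hc hb.1 hb.2.2.1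
      intro k hk
      have hσk : σ k = some (Sum.inr j) := (Finset.mem_filter.mp hk).2
      have ht := htag (gk k)
      rw [show σf (gk k) = some (Sum.inr j) from hσk] at ht
      exact LCS_indicator D hc hb.1 hb.2.2.1 (hRopen k) (hRc k)
        (Set.Subset.trans (hRsub k) ht) _
    have hgoods : ∀ i, MemCcR R (V i) (goods i) := by
      intro i
      apply MemCcR_sum
      intro k hk
      have hσk : σ k = some (Sum.inl i) := (Finset.mem_filter.mp hk).2
      have ht := htag (gk k)
      rw [show σf (gk k) = some (Sum.inl i) from hσk] at ht
      exact MemCcR_indicator D (hV i).1 (hV i).2.2.1 (hRopen k) (hRc k)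
        ((hRsub k).trans ht) _
    set S : Fin p → Set G := fun k => if ∃ i, σ k = some (Sum.inl i) then Rk k else ∅ with hS
    set K' : Set G := K ∪ ⋃ k, S k with hK'
    have hK'c : IsCompact K' := by
      refine hKc.union (isCompact_iUnion fun k => ?_)
      by_cases hx : ∃ i, σ k = some (Sum.inl i)
      · rw [hS]; simp only [if_pos hx]; exact hRc k
      · rw [hS]; simp only [if_neg hx]; exact isCompact_empty
    have hK'V : K' ⊆ ⋃ i, V i := by
      intro g hg
      rcases hg with hg | hg
      · exact hKV hg
      · obtain ⟨k, hk⟩ := Set.mem_iUnion.mp hg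
        by_cases hx : ∃ i, σ k = some (Sum.inl i)
        · obtain ⟨i, hi⟩ := hx
          have ht := htag (gk k)
          rw [show σf (gk k) = some (Sum.inl i) from hi] at ht
          have hgR : g ∈ Rk k := by
            rw [hS] at hk
            simpa only [if_pos (⟨i, hi⟩ : ∃ i, σ k = some (Sum.inl i))] using hk
          exact Set.mem_iUnion.mpr ⟨i, ht ((hRsub k) hgR)⟩
        · rw [hS] at hk
          simp only [if_neg hx] at hk
          exact absurd hk (Set.notMem_empty g)
    have hsupp'' : ∀ g, (∑ j, hs'' j) g ≠ 0 → g ∈ K' := by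
      intro g hne
      by_cases hgK : g ∈ K
      · exact Or.inl hgK
      · have hfg : (∑ j : Fin (m + 1), hs j) g = 0 := by
          by_contra hx
          exact hgK (hsupp g hx)
        have h1 : h g + F g = 0 := by
          rw [hsum] at hfg
          exact hfg
        have hFg : F g = -(h g) := (neg_eq_of_add_eq_zero_right h1).symm
        have h2 : h g = (∑ i, goods i) g + (∑ j, absf j) g := by
          conv_lhs => rw [hident, hsplit]
          rfl
        have h3 : (∑ j, hs'' j) g = -((∑ i, goods i) g) := by
          rw [hdec, Pi.add_apply, hFg, h2]
          abel
        have hgne : (∑ i, goods i) g ≠ 0 := by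
          intro h0
          rw [h3, h0, neg_zero] at hne
          exact hne rfl
        rw [Finset.sum_apply] at hgne
        obtain ⟨i, _, hi⟩ := Finset.exists_ne_zero_of_sum_ne_zero hgne
        rw [hgoods_def] at hi
        simp only [Finset.sum_apply] at hi
        obtain ⟨k, hkmem, hk⟩ := Finset.exists_ne_zero_of_sum_ne_zero hi
        have hσk : σ k = some (Sum.inl i) := (Finset.mem_filter.mp hkmem).2
        have hgR : g ∈ Rk k := by
          by_contra hgR
          exact hk (Set.indicator_of_notMem hgR _)
        refine Or.inr (Set.mem_iUnion.mpr ⟨k, ?_⟩)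
        rw [hS]
        simp only [if_pos (⟨i, hσk⟩ : ∃ i, σ k = some (Sum.inl i))]
        exact hgR
    obtain ⟨fs', hfs', hFeq⟩ := ih Us' hs'' hprops'' K' hK'c hK'V hsupp''
    refine ⟨fun i => goods i + fs' i, fun i => MemCcR_add (hgoods i) (hfs' i), ?_⟩
    calc (∑ j : Fin (m + 1), hs j) = h + F := hsum
      _ = ((∑ i, goods i) + ∑ j, absf j) + F := by rw [← hsplit, ← hident]
      _ = (∑ i, goods i) + (∑ j, hs'' j) := by rw [hdec]; abel
      _ = (∑ i, goods i) + (∑ i, fs' i) := by rw [hFeq]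
      _ = ∑ i, (goods i + fs' i) := Finset.sum_add_distrib.symm

/-- Let `G` be an ample groupoid, `R` a ring and `f ∈ RG`.  Suppose there are
open bisections `V₁, …, V_n` and a compact set `K ⊆ V₁ ∪ ⋯ ∪ V_n` with `supp°(f) ⊆ K`.  Then
there are `f₁, …, f_n` with `f_i ∈ C_c(V_i, R)` for all `i` and `f = f₁ + ⋯ + f_n`. -/
theorem stmt11 [LocallyCompactSpace G] (D : GroupoidData G) [T2Space ↥D.X]
    [TotallyDisconnectedSpace ↥D.X] (hXopen : IsOpen D.X) (hetale : D.IsEtale)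
    (R : Type) [NonUnitalRing R] (f : G → R) (hf : f ∈ D.Steinberg R)
    (n : ℕ) (V : Fin n → Set G) (hV : ∀ i, D.IsOpenBisection (V i))
    (K : Set G) (hK : IsCompact K) (hKV : K ⊆ ⋃ i, V i)
    (hsupp : ∀ g : G, f g ≠ 0 → g ∈ K) :
    ∃ fs : Fin n → G → R, (∀ i, MemCcR R (V i) (fs i)) ∧ f = ∑ i, fs i := by
  obtain ⟨m, Us, hs, hprops, hfe⟩ := steinberg_repr D hf
  obtain ⟨fs, h1, h2⟩ := main_split D hV m Us hs hprops K hK hKV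
    (fun g hg => hsupp g (by rwa [hfe]))
  exact ⟨fs, h1, hfe.trans h2⟩
end

section
/- Suppose there exist n ≥ 1 and open bisections U₁,…,U_n ⊆ G with s(U_i) = s(U_j) for all i,j, such that each U_i \ (∪_{j≠i} U_j) is nonempty with empty interior, and such that span_ℚ{b_I : I ⊆ {1,…,n}, #I > 1, (∩_{i∈I} U_i) \ (∪_{j∉I} U_j) ≠ ∅} ≠ ℚ^n, where b_I = Σ_{i∈I} e_i. Then there exists a nonzero f ∈ 𝒞_c(G) whose strict support supp°(f) has empty interior; i.e., the singular ideal of C*_r(G) intersects 𝒞_c(G) nontrivially. -/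
variable {G : Type} [TopologicalSpace G]

/-- Condition `(𝒮)` over a coefficient ring `K` (taking `K = ℚ` gives condition `(𝒮₀)` and
`K = ℤ/tℤ` gives condition `(𝒮_t)` for `t > 1`): there exist `n ≥ 1` and open bisections
`U₁, …, U_n` with `s(U_i) = s(U_j)` for all `i, j`, such that each `U_i \ ⋃_{j ≠ i} U_j` is
nonempty with empty interior, and such that the `K`-span of the vectors
`b_I = ∑_{i ∈ I} e_i`, over subsets `I ⊆ {1, …, n}` with `#I > 1` and
`(⋂_{i ∈ I} U_i) \ (⋃_{j ∉ I} U_j) ≠ ∅`, is a proper submodule of `K^n`. -/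
def GroupoidData.ConditionS (D : GroupoidData G) (K : Type) [CommRing K] : Prop :=
  ∃ (n : ℕ) (U : Fin n → Set G), 0 < n ∧
    (∀ i, D.IsOpenBisection (U i)) ∧
    (∀ i j, D.s '' U i = D.s '' U j) ∧
    (∀ i, (U i \ ⋃ (j) (_ : j ≠ i), U j).Nonempty) ∧
    (∀ i, interior (U i \ ⋃ (j) (_ : j ≠ i), U j) = ∅) ∧
    Submodule.span K {b : Fin n → K | ∃ I : Finset (Fin n), 1 < I.card ∧
      ((⋂ i ∈ I, U i) \ ⋃ (j) (_ : j ∉ I), U j).Nonempty ∧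
      b = fun i => if i ∈ I then (1 : K) else 0} ≠ ⊤


section Aux

open Set Function

variable {Z : Type*} [TopologicalSpace Z]

lemma aux_interior_union_closed {A B : Set Z} (hA : IsClosed A)
    (hA' : interior A = ∅) (hB' : interior B = ∅) : interior (A ∪ B) = ∅ := by
  have h1 : interior (A ∪ B) \ A ⊆ interior B := by
    refine interior_maximal ?_ (isOpen_interior.sdiff hA)
    rintro x ⟨hx1, hx2⟩
    rcases interior_subset hx1 with h | h
    · exact absurd h hx2
    · exact h
  have h2 : interior (A ∪ B) ⊆ A := by
    intro x hx
    by_contra hxA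
    have := h1 ⟨hx, hxA⟩
    rw [hB'] at this
    exact this
  have h3 := interior_maximal h2 isOpen_interior
  rw [hA'] at h3
  exact eq_empty_of_subset_empty h3

lemma aux_interior_biUnion {ι : Type*} (s : Finset ι) (C : ι → Set Z)
    (hC : ∀ i, IsClosed (C i)) (hC' : ∀ i, interior (C i) = ∅) :
    interior (⋃ i ∈ s, C i) = ∅ := by
  classical
  induction s using Finset.induction_on with
  | empty => simp
  | insert a s ha ih =>
    rw [Finset.set_biUnion_insert]
    exact aux_interior_union_closed (hC _) (hC' _) ih

lemma aux_nowhereDense_locallyClosed {O W : Set Z} (hO : IsOpen O) (hW : IsOpen W)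
    (h : interior (O \ W) = ∅) : interior (closure (O \ W)) = ∅ := by
  set S := O \ W with hS
  by_contra hne
  obtain ⟨x, hx⟩ := Set.nonempty_iff_ne_empty.mpr hne
  have hVO : interior (closure S) ∩ O ⊆ S := by
    intro y hy
    have hy1 : y ∈ closure S := interior_subset hy.1
    have hy2 : y ∈ closure Wᶜ := closure_mono (fun z hz => hz.2) hy1
    rw [IsClosed.closure_eq (isClosed_compl_iff.mpr hW)] at hy2
    exact ⟨hy.2, hy2⟩
  have hVO' : interior (closure S) ∩ O ⊆ interior S :=
    interior_maximal hVO (isOpen_interior.inter hO)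
  obtain ⟨y, hyV, hyS⟩ := mem_closure_iff.mp (interior_subset hx) _ isOpen_interior hx
  have hfin := hVO' ⟨hyV, hyS.1⟩
  rw [h] at hfin
  exact hfin

end Aux

section BisInv

open Set Function

lemma bisection_invFunOn_continuousOn [Nonempty G] (D : GroupoidData G) {U : Set G}
    (hU : D.IsOpenBisection U) :
    ContinuousOn (Function.invFunOn D.s U) (D.s '' U) := by
  rw [continuousOn_iff']
  intro t ht
  refine ⟨D.s '' (t ∩ U), hU.2.2.2.2 _ inter_subset_right (ht.inter hU.1), ?_⟩
  ext y
  constructor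
  · rintro ⟨hyt, g, hgU, rfl⟩
    have hg : Function.invFunOn D.s U (D.s g) = g := hU.2.2.1.leftInvOn_invFunOn hgU
    rw [mem_preimage, hg] at hyt
    exact ⟨⟨g, ⟨hyt, hgU⟩, rfl⟩, ⟨g, hgU, rfl⟩⟩
  · rintro ⟨⟨g, ⟨hgt, hgU⟩, rfl⟩, -⟩
    have hg : Function.invFunOn D.s U (D.s g) = g := hU.2.2.1.leftInvOn_invFunOn hgU
    exact ⟨by rw [mem_preimage, hg]; exact hgt, ⟨g, hgU, rfl⟩⟩

end BisInv

/-- If `G` satisfies condition `(𝒮₀)`, then there exists a nonzero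
`f ∈ 𝒞_c(G)` whose strict support has empty interior; i.e. the singular ideal of `C*_r(G)`
intersects `𝒞_c(G)` nontrivially. -/
theorem stmt12 [LocallyCompactSpace G] (D : GroupoidData G) [T2Space ↥D.X]
    (hXopen : IsOpen D.X) (hetale : D.IsEtale)
    (hS : D.ConditionS ℚ) :
    ∃ f : G → ℂ, f ∈ D.CcSpan ∧ f ≠ 0 ∧ interior {g : G | f g ≠ 0} = ∅ := by
  classical
  obtain ⟨n, U, hn, hbis, hsame, hne, hint, hspan⟩ := hS
  obtain ⟨φ, hφ0, hφker⟩ :=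
    Submodule.exists_dual_map_eq_bot_of_lt_top (lt_top_iff_ne_top.mpr hspan) inferInstance
  set c : Fin n → ℚ := fun i => φ (Pi.single i 1) with hcdef
  have hφeval : ∀ v : Fin n → ℚ, φ v = ∑ i, v i * c i := by
    intro v
    conv_lhs => rw [← Finset.univ_sum_single v]
    rw [map_sum]
    refine Finset.sum_congr rfl fun i _ => ?_
    have hvs : Pi.single i (v i) = v i • (Pi.single i 1 : Fin n → ℚ) := by
      funext j
      by_cases hj : j = i <;> simp [Pi.single_apply, hj]
    rw [hvs, map_smul, smul_eq_mul]
  have hc0 : ∃ i, c i ≠ 0 := by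
    by_contra hall
    push_neg at hall
    apply hφ0
    apply LinearMap.ext
    intro v
    simp [hφeval v, hall]
  obtain ⟨i₀, hci₀⟩ := hc0
  have hconstraint : ∀ I : Finset (Fin n), 1 < I.card →
      ((⋂ i ∈ I, U i) \ ⋃ (j) (_ : j ∉ I), U j).Nonempty → ∑ i ∈ I, c i = 0 := by
    intro I hI hloc
    have hb : (fun i => if i ∈ I then (1 : ℚ) else 0) ∈
        Submodule.span ℚ {b : Fin n → ℚ | ∃ I : Finset (Fin n), 1 < I.card ∧
          ((⋂ i ∈ I, U i) \ ⋃ (j) (_ : j ∉ I), U j).Nonempty ∧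
          b = fun i => if i ∈ I then (1 : ℚ) else 0} :=
      Submodule.subset_span ⟨I, hI, hloc, rfl⟩
    have hmap : φ (fun i => if i ∈ I then (1 : ℚ) else 0) = 0 := by
      have h' := Submodule.mem_map_of_mem (f := φ) hb
      rw [hφker, Submodule.mem_bot] at h'
      exact h'
    rw [hφeval] at hmap
    simp only [ite_mul, one_mul, zero_mul] at hmap
    rwa [Finset.sum_ite_mem, Finset.univ_inter] at hmap
  -- geometric data
  obtain ⟨g₀, hg₀⟩ := hne i₀
  haveI : Nonempty G := ⟨g₀⟩
  haveI : LocallyCompactSpace ↥D.X := hXopen.locallyCompactSpace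
  set Y : Set G := D.s '' U i₀ with hYdef
  have hYopen : IsOpen Y := (hbis i₀).2.2.2.2 (U i₀) subset_rfl (hbis i₀).1
  set Y' : Set ↥D.X := Subtype.val ⁻¹' Y with hY'def
  have hY'open : IsOpen Y' := hYopen.preimage continuous_subtype_val
  set x₀ : ↥D.X := ⟨D.s g₀, D.s_mem g₀⟩ with hx₀def
  have hx₀Y' : x₀ ∈ Y' := ⟨g₀, hg₀.1, rfl⟩
  obtain ⟨k, kcomp, kcl, hk1, hk2⟩ := exists_compact_closed_between isCompact_singleton
    hY'open (Set.singleton_subset_iff.mpr hx₀Y')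
  obtain ⟨h, h1, h0, -, -⟩ := exists_continuous_one_zero_of_isCompact
    (isCompact_singleton : IsCompact {x₀}) isOpen_interior.isClosed_compl
    (Set.disjoint_left.mpr fun a ha hac => hac (hk1 ha))
  set H : G → ℂ := fun g => if hg : g ∈ D.X then ((h ⟨g, hg⟩ : ℝ) : ℂ) else 0 with hHdef
  have hHcont : ContinuousOn H D.X := by
    rw [continuousOn_iff_continuous_restrict]
    have hres : D.X.domRestrict H = fun x : ↥D.X => ((h x : ℝ) : ℂ) := by
      funext x
      simp only [Set.domRestrict_apply, hHdef, dif_pos x.2]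
    rw [hres]
    exact Complex.continuous_ofReal.comp h.continuous
  set F' : Fin n → G → ℂ := fun i => (U i).indicator (fun g => H (D.s g)) with hF'def
  have hmem : ∀ i, MemCc (U i) (F' i) := by
    intro i
    refine ⟨?_, fun g hg => Set.indicator_of_notMem hg _, ?_⟩
    · exact (hHcont.comp D.continuous_s.continuousOn fun g _ => D.s_mem g).congr
        fun g hg => Set.indicator_of_mem hg _
    · have hTY : (Subtype.val '' k : Set G) ⊆ D.s '' U i := by
        rw [hsame i i₀]
        rintro _ ⟨x, hxk, rfl⟩
        exact hk2 hxk
      refine ⟨Function.invFunOn D.s (U i) '' (Subtype.val '' k), ?_, ?_, ?_⟩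
      · exact (kcomp.image continuous_subtype_val).image_of_continuousOn
          ((bisection_invFunOn_continuousOn D (hbis i)).mono hTY)
      · rintro _ ⟨y, hyT, rfl⟩
        obtain ⟨g, hgU, hgy⟩ := hTY hyT
        exact Function.invFunOn_mem ⟨g, hgU, hgy⟩
      · intro g hg
        have hgU : g ∈ U i := by
          by_contra hx
          exact hg (Set.indicator_of_notMem hx _)
        have hH : H (D.s g) ≠ 0 := by
          rw [show F' i g = H (D.s g) from Set.indicator_of_mem hgU _] at hg
          exact hg
        have hsX : D.s g ∈ D.X := D.s_mem g
        have hh : h ⟨D.s g, hsX⟩ ≠ 0 := by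
          intro h0'
          apply hH
          simp [hHdef, dif_pos hsX, h0']
        have hk' : (⟨D.s g, hsX⟩ : ↥D.X) ∈ k := by
          by_contra hnk
          exact hh (h0 fun hik => hnk (interior_subset hik))
        exact ⟨D.s g, ⟨⟨D.s g, hsX⟩, hk', rfl⟩, (hbis i).2.2.1.leftInvOn_invFunOn hgU⟩
  set F : G → ℂ := ∑ i ∈ Finset.univ, ((c i : ℂ)) • F' i with hFdef
  have hFmem : F ∈ D.CcSpan :=
    Submodule.sum_mem _ fun i _ =>
      Submodule.smul_mem _ _ (Submodule.subset_span ⟨U i, hbis i, hmem i⟩)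
  have hFapp : ∀ g, F g = ∑ i, (c i : ℂ) * F' i g := by
    intro g
    rw [hFdef, Finset.sum_apply]
    rfl
  have hHx₀ : H (D.s g₀) = 1 := by
    have : H (D.s g₀) = ((h x₀ : ℝ) : ℂ) := by
      simp only [hHdef, dif_pos (D.s_mem g₀)]
      rfl
    rw [this, h1 rfl]
    norm_num
  have hFg₀ : F g₀ = (c i₀ : ℂ) := by
    rw [hFapp]
    rw [Finset.sum_eq_single i₀]
    · rw [show F' i₀ g₀ = H (D.s g₀) from Set.indicator_of_mem hg₀.1 _, hHx₀, mul_one]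
    · intro j _ hj
      have hnm : g₀ ∉ U j := fun hmem' =>
        hg₀.2 (Set.mem_iUnion.mpr ⟨j, Set.mem_iUnion.mpr ⟨hj, hmem'⟩⟩)
      rw [show F' j g₀ = 0 from Set.indicator_of_notMem hnm _, mul_zero]
    · intro habs
      exact absurd (Finset.mem_univ i₀) habs
  have hFne : F ≠ 0 := by
    intro h'
    have hz : (c i₀ : ℂ) = 0 := by
      rw [← hFg₀, h']
      rfl
    exact hci₀ (by exact_mod_cast hz)
  refine ⟨F, hFmem, hFne, ?_⟩
  have hsub : {g : G | F g ≠ 0} ⊆ ⋃ i, (U i \ ⋃ (j) (_ : j ≠ i), U j) := by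
    intro g hg
    set I : Finset (Fin n) := Finset.univ.filter (fun i => g ∈ U i) with hIdef
    have hFg : F g = ((∑ i ∈ I, c i : ℚ) : ℂ) * H (D.s g) := by
      rw [hFapp]
      rw [← Finset.sum_subset I.subset_univ (fun j _ hj => ?_)]
      · push_cast
        rw [Finset.sum_mul]
        refine Finset.sum_congr rfl fun i hi => ?_
        have hgi : g ∈ U i := by
          simpa [hIdef] using hi
        rw [show F' i g = H (D.s g) from Set.indicator_of_mem hgi _]
      · have hnm : g ∉ U j := by
          simpa [hIdef] using hj
        rw [show F' j g = 0 from Set.indicator_of_notMem hnm _, mul_zero]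
    have hg' : F g ≠ 0 := hg
    have hIne : I.Nonempty := by
      by_contra hem
      rw [Finset.not_nonempty_iff_eq_empty] at hem
      exact hg' (by rw [hFg, hem]; simp)
    rcases lt_or_ge 1 I.card with hcard | hcard
    · exfalso
      have hloc : ((⋂ i ∈ I, U i) \ ⋃ (j) (_ : j ∉ I), U j).Nonempty := by
        refine ⟨g, Set.mem_iInter₂.mpr fun i hi => by simpa [hIdef] using hi, ?_⟩
        intro hmem'
        obtain ⟨j, hj⟩ := Set.mem_iUnion.mp hmem'
        obtain ⟨hjI, hjU⟩ := Set.mem_iUnion.mp hj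
        exact hjI (by simp [hIdef, hjU])
      have hzero := hconstraint I hcard hloc
      exact hg' (by rw [hFg, hzero]; simp)
    · have hcard1 : I.card = 1 := le_antisymm hcard (Finset.card_pos.mpr hIne)
      obtain ⟨i, hIi⟩ := Finset.card_eq_one.mp hcard1
      refine Set.mem_iUnion.mpr ⟨i, ?_, ?_⟩
      · have hiI : i ∈ I := hIi ▸ Finset.mem_singleton_self i
        simpa [hIdef] using hiI
      · intro hmem'
        obtain ⟨j, hj⟩ := Set.mem_iUnion.mp hmem'
        obtain ⟨hji, hjU⟩ := Set.mem_iUnion.mp hj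
        have hjI : j ∈ I := by simp [hIdef, hjU]
        rw [hIi, Finset.mem_singleton] at hjI
        exact hji hjI
  have hsub2 : {g : G | F g ≠ 0} ⊆
      ⋃ i ∈ (Finset.univ : Finset (Fin n)), closure (U i \ ⋃ (j) (_ : j ≠ i), U j) := by
    refine hsub.trans (Set.iUnion_subset fun i x hx => ?_)
    exact Set.mem_iUnion₂.mpr ⟨i, Finset.mem_univ i, subset_closure hx⟩
  have hcl : interior (⋃ i ∈ (Finset.univ : Finset (Fin n)),
      closure (U i \ ⋃ (j) (_ : j ≠ i), U j)) = ∅ := by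
    refine aux_interior_biUnion _ _ (fun i => isClosed_closure) fun i => ?_
    exact aux_nowhereDense_locallyClosed (hbis i).1
      (isOpen_iUnion fun j => isOpen_iUnion fun _ => (hbis j).1) (hint i)
  exact Set.eq_empty_of_subset_empty (hcl ▸ interior_mono hsub2)
end

section
/- Let G be a non-Hausdorff étale groupoid. The intersection of the singular ideal J of C*_r(G) with 𝒞_c(G) is nonzero if and only if G satisfies condition (𝒮₀). -/
variable {G : Type} [TopologicalSpace G]

/-! ### Infrastructure -/

namespace Stmt13Aux

open Set

variable (D : GroupoidData G)

/-- The section of `s` over an open bisection, with junk value outside. -/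
noncomputable def secF (V : Set G) (x : G) : G :=
  letI := Classical.dec (∃ g, g ∈ V ∧ D.s g = x)
  if h : ∃ g, g ∈ V ∧ D.s g = x then h.choose else x

lemma secF_spec {V : Set G} {x : G} (hx : x ∈ D.s '' V) :
    secF D V x ∈ V ∧ D.s (secF D V x) = x := by
  obtain ⟨g, hg, hgx⟩ := hx
  have h : ∃ g, g ∈ V ∧ D.s g = x := ⟨g, hg, hgx⟩
  simp only [secF]
  rw [dif_pos h]
  exact h.choose_spec

lemma secF_eq {V : Set G} (hV : D.IsOpenBisection V) {g x : G} (hg : g ∈ V)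
    (hx : D.s g = x) : secF D V x = g := by
  have hmem : x ∈ D.s '' V := ⟨g, hg, hx⟩
  obtain ⟨h1, h2⟩ := secF_spec D hmem
  exact hV.2.2.1 h1 hg (h2.trans hx.symm)

lemma mem_iff_secF {V : Set G} (hV : D.IsOpenBisection V) {g : G} :
    g ∈ V ↔ D.s g ∈ D.s '' V ∧ secF D V (D.s g) = g := by
  constructor
  · intro hg; exact ⟨⟨g, hg, rfl⟩, secF_eq D hV hg rfl⟩
  · rintro ⟨hx, hsec⟩; rw [← hsec]; exact (secF_spec D hx).1

lemma isOpen_image_s {V : Set G} (hV : D.IsOpenBisection V) : IsOpen (D.s '' V) :=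
  hV.2.2.2.2 V subset_rfl hV.1

/-- `s''(V ∩ s⁻¹ A) = (s''V) ∩ A`. -/
lemma image_s_inter_preimage {V : Set G} (A : Set G) :
    D.s '' (V ∩ D.s ⁻¹' A) = D.s '' V ∩ A := by
  ext x; constructor
  · rintro ⟨g, ⟨hg, hA⟩, rfl⟩; exact ⟨⟨g, hg, rfl⟩, hA⟩
  · rintro ⟨⟨g, hg, rfl⟩, hA⟩; exact ⟨g, ⟨hg, hA⟩, rfl⟩

lemma bisection_mono {V U : Set G} (hV : D.IsOpenBisection V) (hU : IsOpen U)
    (hUV : U ⊆ V) : D.IsOpenBisection U :=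
  ⟨hU, hV.2.1.mono hUV, hV.2.2.1.mono hUV,
    fun W hW hWo => hV.2.2.2.1 W (hW.trans hUV) hWo,
    fun W hW hWo => hV.2.2.2.2 W (hW.trans hUV) hWo⟩

lemma bisection_inter_preimage {V : Set G} (hV : D.IsOpenBisection V) {A : Set G}
    (hA : IsOpen A) : D.IsOpenBisection (V ∩ D.s ⁻¹' A) :=
  bisection_mono D hV (hV.1.inter (hA.preimage D.continuous_s)) inter_subset_left

lemma continuousOn_secF {V : Set G} (hV : D.IsOpenBisection V) :
    ContinuousOn (secF D V) (D.s '' V) := by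
  intro x hx
  have key : ∀ O : Set G, IsOpen O → secF D V x ∈ O →
      secF D V ⁻¹' O ∈ nhdsWithin x (D.s '' V) := by
    intro O hOo hxO
    refine mem_nhdsWithin.2 ⟨D.s '' (V ∩ O),
      hV.2.2.2.2 _ Set.inter_subset_left (hV.1.inter hOo),
      ⟨secF D V x, ⟨(secF_spec D hx).1, hxO⟩, (secF_spec D hx).2⟩, ?_⟩
    rintro y ⟨⟨g, ⟨hgV, hgO⟩, rfl⟩, _⟩
    have : secF D V (D.s g) = g := secF_eq D hV hgV rfl
    simp only [Set.mem_preimage, this]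
    exact hgO
  exact tendsto_nhds.2 key

/-- The set where two sections agree is the `s`-image of the intersection. -/
lemma sec_eq_iff {V W : Set G} (hV : D.IsOpenBisection V) (hW : D.IsOpenBisection W)
    {x : G} (hxV : x ∈ D.s '' V) (hxW : x ∈ D.s '' W) :
    secF D V x = secF D W x ↔ x ∈ D.s '' (V ∩ W) := by
  constructor
  · intro h
    refine ⟨secF D V x, ⟨(secF_spec D hxV).1, ?_⟩, (secF_spec D hxV).2⟩
    rw [h]; exact (secF_spec D hxW).1
  · rintro ⟨g, ⟨hgV, hgW⟩, rfl⟩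
    rw [secF_eq D hV hgV rfl, secF_eq D hW hgW rfl]

/-- Finite union of sets closed in an open set `W`, each with empty interior, has empty
interior. Here `A i = W \ B i` with `B i` open. -/
lemma interior_finite_union_empty {n : ℕ} {W : Set G} (hW : IsOpen W)
    (A B : Fin n → Set G) (hAB : ∀ i, A i = W \ B i) (hB : ∀ i, IsOpen (B i))
    (hint : ∀ i, interior (A i) = ∅) :
    ∀ T : Finset (Fin n), interior (⋃ i ∈ T, A i) = ∅ := by
  intro T
  induction T using Finset.induction with
  | empty => simp
  | @insert a T ha IH =>
    set V := interior (⋃ i ∈ insert a T, A i) with hV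
    have hVopen : IsOpen V := isOpen_interior
    have hVsub : V ⊆ ⋃ i ∈ insert a T, A i := interior_subset
    have hVW : V ⊆ W := by
      intro v hv
      obtain ⟨i, _, hvi⟩ := mem_iUnion₂.1 (hVsub hv)
      rw [hAB i] at hvi; exact hvi.1
    have h1 : V ∩ B a ⊆ ⋃ i ∈ T, A i := by
      intro v ⟨hv, hvB⟩
      obtain ⟨i, hi, hvi⟩ := mem_iUnion₂.1 (hVsub hv)
      rcases Finset.mem_insert.1 hi with rfl | hiT
      · rw [hAB i] at hvi; exact absurd hvB hvi.2
      · exact mem_iUnion₂.2 ⟨i, hiT, hvi⟩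
    have h2 : V ∩ B a = ∅ := by
      have : V ∩ B a ⊆ interior (⋃ i ∈ T, A i) :=
        (hVopen.inter (hB a)).subset_interior_iff.2 h1
      rw [IH] at this; exact subset_empty_iff.1 this
    have h3 : V ⊆ A a := by
      intro v hv
      rw [hAB a]
      refine ⟨hVW hv, fun hvB => ?_⟩
      exact absurd (mem_inter hv hvB) (by rw [h2]; exact fun h => h)
    have := hVopen.subset_interior_iff.2 h3
    rw [hint a] at this
    exact subset_empty_iff.1 this





/-- Urysohn-type bump at a point inside an open `W ⊆ X`. -/
lemma urysohn_point [LocallyCompactSpace G] [T2Space ↥D.X] (hXopen : IsOpen D.X)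
    {W : Set G} (hW : IsOpen W) (hWX : W ⊆ D.X) {x : G} (hx : x ∈ W) :
    ∃ (φ : G → ℂ) (Kφ : Set G), ContinuousOn φ D.X ∧ φ x = 1 ∧ IsCompact Kφ ∧ Kφ ⊆ W ∧
      (∀ y, φ y ≠ 0 → y ∈ Kφ) := by
  haveI : LocallyCompactSpace ↥D.X := hXopen.isLocallyClosed.locallyCompactSpace
  set W' : Set ↥D.X := Subtype.val ⁻¹' W with hW'
  have hW'open : IsOpen W' := hW.preimage continuous_subtype_val
  set x' : ↥D.X := ⟨x, hWX hx⟩ with hx'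
  have hx'W : x' ∈ W' := hx
  obtain ⟨L, Lcomp, _, hxL, hLW⟩ :=
    exists_compact_closed_between (isCompact_singleton (x := x')) hW'open
      (singleton_subset_iff.2 hx'W)
  obtain ⟨φ', h1, h0, _, _⟩ :=
    exists_continuous_one_zero_of_isCompact (isCompact_singleton (x := x'))
      (isOpen_interior (s := L)).isClosed_compl
      (disjoint_compl_right_iff_subset.2 hxL)
  classical
  refine ⟨fun y => if h : y ∈ D.X then ((φ' ⟨y, h⟩ : ℝ) : ℂ) else 0,
    Subtype.val '' L, ?_, ?_, Lcomp.image continuous_subtype_val,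
    by rintro _ ⟨z, hz, rfl⟩; exact hLW hz, ?_⟩
  · rw [continuousOn_iff_continuous_restrict]
    have : (D.X.domRestrict fun y => if h : y ∈ D.X then ((φ' ⟨y, h⟩ : ℝ) : ℂ) else 0) =
        fun z : ↥D.X => ((φ' z : ℝ) : ℂ) := by
      funext z; simp [Set.domRestrict]
    rw [this]
    exact Complex.continuous_ofReal.comp φ'.continuous
  · have : φ' x' = 1 := h1 rfl
    simp [hWX hx]; exact this
  · intro y hy
    by_cases h : y ∈ D.X
    · simp only [dif_pos h] at hy
      have hφ' : φ' ⟨y, h⟩ ≠ 0 := by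
        intro h0'; apply hy; rw [h0']; simp
      have : (⟨y, h⟩ : ↥D.X) ∈ interior L := by
        by_contra hc
        exact hφ' (h0 hc)
      exact ⟨⟨y, h⟩, interior_subset this, rfl⟩
    · simp [dif_neg h] at hy

theorem backward [LocallyCompactSpace G] [T2Space ↥D.X] (hXopen : IsOpen D.X)
    (hS : D.ConditionS ℚ) :
    ∃ f : G → ℂ, f ∈ D.CcSpan ∧ f ≠ 0 ∧ interior (D.s '' {g : G | f g ≠ 0}) = ∅ := by
  classical
  obtain ⟨n, U, hn, hbis, heq, hne, hint, hspan⟩ := hS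
  -- the rational functional
  obtain ⟨ℓ, hℓ0, hℓmap⟩ :=
    Submodule.exists_dual_map_eq_bot_of_lt_top
      (p := Submodule.span ℚ {b : Fin n → ℚ | ∃ I : Finset (Fin n), 1 < I.card ∧
        ((⋂ i ∈ I, U i) \ ⋃ (j) (_ : j ∉ I), U j).Nonempty ∧
        b = fun i => if i ∈ I then (1 : ℚ) else 0})
      (lt_top_iff_ne_top.2 hspan) inferInstance
  have hℓzero : ∀ b ∈ Submodule.span ℚ {b : Fin n → ℚ | ∃ I : Finset (Fin n), 1 < I.card ∧
      ((⋂ i ∈ I, U i) \ ⋃ (j) (_ : j ∉ I), U j).Nonempty ∧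
      b = fun i => if i ∈ I then (1 : ℚ) else 0}, ℓ b = 0 := by
    intro b hb
    have : ℓ b ∈ Submodule.map ℓ _ := Submodule.mem_map_of_mem hb
    rw [hℓmap] at this
    exact this
  set c : Fin n → ℚ := fun i => ℓ (fun j => if i = j then 1 else 0) with hc
  have hℓsum : ∀ v : Fin n → ℚ, ℓ v = ∑ i, v i * c i := by
    intro v
    conv_lhs => rw [pi_eq_sum_univ v]
    rw [map_sum]
    refine Finset.sum_congr rfl fun i _ => ?_
    rw [map_smul]
    simp [hc, smul_eq_mul]
  have hcne : c ≠ 0 := by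
    intro h
    apply hℓ0
    apply LinearMap.ext
    intro v
    rw [hℓsum v, h]
    simp
  obtain ⟨istar, histar⟩ := Function.ne_iff.1 hcne
  -- the special point
  obtain ⟨gstar, hgU, hgnot⟩ := hne istar
  set xh := D.s gstar with hxh
  set W := D.s '' U istar with hWdef
  have hWopen : IsOpen W := isOpen_image_s D (hbis istar)
  have hWX : W ⊆ D.X := by rintro _ ⟨g, _, rfl⟩; exact D.s_mem g
  have hxhW : xh ∈ W := ⟨gstar, hgU, rfl⟩
  obtain ⟨φ, Kφ, hφcont, hφ1, hKcomp, hKW, hφsupp⟩ := urysohn_point D hXopen hWopen hWX hxhW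
  -- the building blocks
  set fi : Fin n → G → ℂ := fun i g => if g ∈ U i then (c i : ℂ) * φ (D.s g) else 0 with hfi
  have hWi : ∀ i, D.s '' U i = W := fun i => heq i istar
  have hmemcc : ∀ i, MemCc (U i) (fi i) := by
    intro i
    refine ⟨?_, fun g hg => by simp [hfi, hg], ?_⟩
    · apply ContinuousOn.congr (f := fun g => (c i : ℂ) * φ (D.s g))
      · exact continuousOn_const.mul (hφcont.comp D.continuous_s.continuousOn
          (fun g _ => D.s_mem g))
      · intro g hg; simp [hfi, hg]
    · refine ⟨secF D (U i) '' Kφ, ?_, ?_, ?_⟩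
      · apply hKcomp.image_of_continuousOn
        apply (continuousOn_secF D (hbis i)).mono
        rw [hWi i]; exact hKW
      · rintro g ⟨y, hy, rfl⟩
        have : y ∈ D.s '' U i := by rw [hWi i]; exact hKW hy
        exact (secF_spec D this).1
      · intro g hg
        simp only [hfi] at hg
        by_cases hgU : g ∈ U i
        · rw [if_pos hgU] at hg
          have hφne : φ (D.s g) ≠ 0 := fun h => hg (by rw [h, mul_zero])
          have hsg : D.s g ∈ Kφ := hφsupp _ hφne
          exact ⟨D.s g, hsg, secF_eq D (hbis i) hgU rfl⟩
        · rw [if_neg hgU] at hg; exact absurd rfl hg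
  set f : G → ℂ := fun g => ∑ i, fi i g with hf
  have hfspan : f ∈ D.CcSpan := by
    have : f = ∑ i, fi i := by funext g; simp [hf]
    rw [this]
    exact Submodule.sum_mem _ fun i _ =>
      Submodule.subset_span ⟨U i, hbis i, hmemcc i⟩
  -- the pattern formula
  have hpattern : ∀ g, f g =
      ((∑ i ∈ Finset.univ.filter (fun i => g ∈ U i), c i : ℚ) : ℂ) * φ (D.s g) := by
    intro g
    simp only [hf, hfi]
    calc (∑ i, if g ∈ U i then (c i : ℂ) * φ (D.s g) else 0)
        = ∑ i ∈ Finset.univ.filter (fun i => g ∈ U i), (c i : ℂ) * φ (D.s g) :=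
          (Finset.sum_filter _ _).symm
      _ = (∑ i ∈ Finset.univ.filter (fun i => g ∈ U i), (c i : ℂ)) * φ (D.s g) := by
          rw [← Finset.sum_mul]
      _ = _ := by push_cast; ring
  -- f is nonzero
  have hfilstar : Finset.univ.filter (fun i => gstar ∈ U i) = {istar} := by
    ext j
    simp only [Finset.mem_filter, Finset.mem_univ, true_and, Finset.mem_singleton]
    constructor
    · intro hj
      by_contra hne'
      exact hgnot (Set.mem_iUnion₂.2 ⟨j, hne', hj⟩)
    · rintro rfl; exact hgU
  have hfne : f ≠ 0 := by
    intro h0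
    have : f gstar = 0 := by rw [h0]; rfl
    rw [hpattern, hfilstar] at this
    simp only [Finset.sum_singleton, ← hxh, hφ1, mul_one] at this
    exact histar (by exact_mod_cast this)
  -- support analysis
  set B : Fin n → Set G := fun i => D.s '' (U i ∩ ⋃ (j) (_ : j ≠ i), U j) with hB
  have hBopen : ∀ i, IsOpen (B i) := by
    intro i
    apply (hbis i).2.2.2.2 _ inter_subset_left
    exact (hbis i).1.inter (isOpen_iUnion fun j => isOpen_iUnion fun _ => (hbis j).1)
  have hsupp : D.s '' {g : G | f g ≠ 0} ⊆ ⋃ i ∈ (Finset.univ : Finset (Fin n)), (W \ B i) := by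
    rintro _ ⟨g, hg, rfl⟩
    simp only [mem_setOf_eq] at hg
    rw [hpattern] at hg
    have hφne : φ (D.s g) ≠ 0 := fun h => hg (by rw [h, mul_zero])
    have hcsum : (∑ i ∈ Finset.univ.filter (fun i => g ∈ U i), c i) ≠ 0 := by
      intro h; apply hg; rw [h]; simp
    set Ig := Finset.univ.filter (fun i => g ∈ U i) with hIg
    have hIgne : Ig.Nonempty := by
      by_contra h
      rw [Finset.not_nonempty_iff_eq_empty] at h
      rw [h] at hcsum; simp at hcsum
    have hcard : Ig.card ≤ 1 := by
      by_contra h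
      push_neg at h
      have hbmem : (fun i => if i ∈ Ig then (1 : ℚ) else 0) ∈
          Submodule.span ℚ {b : Fin n → ℚ | ∃ I : Finset (Fin n), 1 < I.card ∧
            ((⋂ i ∈ I, U i) \ ⋃ (j) (_ : j ∉ I), U j).Nonempty ∧
            b = fun i => if i ∈ I then (1 : ℚ) else 0} := by
        apply Submodule.subset_span
        refine ⟨Ig, h, ⟨g, ?_, ?_⟩, rfl⟩
        · exact Set.mem_iInter₂.2 fun i hi => (Finset.mem_filter.1 hi).2
        · intro hmem
          obtain ⟨j, hj⟩ := Set.mem_iUnion.1 hmem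
          obtain ⟨hjnot, hjU⟩ := Set.mem_iUnion.1 hj
          exact hjnot (Finset.mem_filter.2 ⟨Finset.mem_univ j, hjU⟩)
      have := hℓzero _ hbmem
      rw [hℓsum] at this
      have heval : (∑ i, (if i ∈ Ig then (1:ℚ) else 0) * c i) = ∑ i ∈ Ig, c i := by
        simp only [ite_mul, one_mul, zero_mul]
        rw [Finset.sum_ite_mem, Finset.univ_inter]
      rw [heval] at this
      exact hcsum this
    obtain ⟨i, hi⟩ := Finset.card_eq_one.1 (le_antisymm hcard hIgne.card_pos)
    have hgUi : g ∈ U i := by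
      have : i ∈ Ig := by rw [hi]; exact Finset.mem_singleton_self i
      exact (Finset.mem_filter.1 this).2
    have hgnotj : ∀ j, j ≠ i → g ∉ U j := by
      intro j hj hgj
      have : j ∈ Ig := Finset.mem_filter.2 ⟨Finset.mem_univ j, hgj⟩
      rw [hi, Finset.mem_singleton] at this
      exact hj this
    refine Set.mem_iUnion₂.2 ⟨i, Finset.mem_univ i, ?_, ?_⟩
    · rw [← hWi i]; exact ⟨g, hgUi, rfl⟩
    · rintro ⟨e, ⟨heUi, heUnion⟩, hse⟩
      have : e = g := (hbis i).2.2.1 heUi hgUi hse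
      rw [this] at heUnion
      obtain ⟨j, hj⟩ := Set.mem_iUnion.1 heUnion
      obtain ⟨hjne, hjU⟩ := Set.mem_iUnion.1 hj
      exact hgnotj j hjne hjU
  have hWBint : ∀ i, interior (W \ B i) = ∅ := by
    intro i
    set O := interior (W \ B i) with hO
    have hOsub : O ⊆ W \ B i := interior_subset
    have hO' : U i ∩ D.s ⁻¹' O ⊆ U i \ ⋃ (j) (_ : j ≠ i), U j := by
      rintro g ⟨hgU', hgO⟩
      refine ⟨hgU', fun hgUnion => ?_⟩
      have : D.s g ∈ B i := ⟨g, ⟨hgU', hgUnion⟩, rfl⟩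
      exact (hOsub hgO).2 this
    have hO'sub : U i ∩ D.s ⁻¹' O ⊆ interior (U i \ ⋃ (j) (_ : j ≠ i), U j) :=
      (((hbis i).1.inter (isOpen_interior.preimage D.continuous_s)).subset_interior_iff).2 hO'
    rw [hint i, Set.subset_empty_iff] at hO'sub
    rw [Set.eq_empty_iff_forall_notMem]
    intro x hx
    have hxW : x ∈ W := (hOsub hx).1
    rw [← hWi i] at hxW
    obtain ⟨e, heU, hes⟩ := hxW
    have : e ∈ U i ∩ D.s ⁻¹' O := ⟨heU, by rw [Set.mem_preimage, hes]; exact hx⟩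
    rw [hO'sub] at this
    exact this
  refine ⟨f, hfspan, hfne, ?_⟩
  have hiue := interior_finite_union_empty hWopen (fun i => W \ B i) B (fun i => rfl)
    hBopen hWBint Finset.univ
  have hsub := interior_mono hsupp
  rw [hiue] at hsub
  exact Set.subset_empty_iff.1 hsub




lemma memCc_smul {U : Set G} {h : G → ℂ} (hh : MemCc U h) (a : ℂ) :
    MemCc U (fun g => a * h g) := by
  obtain ⟨h1, h2, K, hK1, hK2, hK3⟩ := hh
  refine ⟨continuousOn_const.mul h1, fun g hg => ?_,
    K, hK1, hK2, fun g hg => hK3 g (fun h0 => hg ?_)⟩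
  · show a * h g = 0
    rw [h2 g hg, mul_zero]
  · show a * h g = 0
    rw [h0, mul_zero]

lemma ccSpan_rep {f : G → ℂ} (hf : f ∈ D.CcSpan) :
    ∃ (m : ℕ) (V : Fin m → Set G) (ff : Fin m → (G → ℂ)),
      (∀ k, D.IsOpenBisection (V k)) ∧ (∀ k, MemCc (V k) (ff k)) ∧
      ∀ g, f g = ∑ k, ff k g := by
  set S : Submodule ℂ (G → ℂ) :=
    { carrier := {f | ∃ (m : ℕ) (V : Fin m → Set G) (ff : Fin m → (G → ℂ)),
        (∀ k, D.IsOpenBisection (V k)) ∧ (∀ k, MemCc (V k) (ff k)) ∧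
        ∀ g, f g = ∑ k, ff k g}
      zero_mem' := ⟨0, Fin.elim0, Fin.elim0, fun k => k.elim0, fun k => k.elim0,
        fun g => by simp⟩
      add_mem' := by
        rintro f₁ f₂ ⟨m₁, V₁, ff₁, hb₁, hm₁, hs₁⟩ ⟨m₂, V₂, ff₂, hb₂, hm₂, hs₂⟩
        refine ⟨m₁ + m₂, Fin.addCases V₁ V₂, Fin.addCases ff₁ ff₂, ?_, ?_, ?_⟩
        · intro k
          refine Fin.addCases (fun i => ?_) (fun i => ?_) k <;> simp [hb₁, hb₂]
        · intro k
          refine Fin.addCases (fun i => ?_) (fun i => ?_) k <;> simp [hm₁, hm₂]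
        · intro g
          rw [Fin.sum_univ_add]
          simp only [Fin.addCases_left, Fin.addCases_right]
          rw [Pi.add_apply, hs₁ g, hs₂ g]
      smul_mem' := by
        rintro a f ⟨m, V, ff, hb, hm, hs⟩
        refine ⟨m, V, fun k g => a * ff k g, hb, fun k => memCc_smul (hm k) a, ?_⟩
        intro g
        rw [Pi.smul_apply, hs g, smul_eq_mul, Finset.mul_sum] }
  have : D.CcSpan ≤ S := by
    rw [GroupoidData.CcSpan, Submodule.span_le]
    rintro h ⟨U, hU, hmem⟩
    exact ⟨1, fun _ => U, fun _ => h, fun _ => hU, fun _ => hmem, fun g => by simp⟩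
  exact this hf



theorem forward (D : GroupoidData G) [T2Space ↥D.X] (hXopen : IsOpen D.X)
    {f : G → ℂ} (hf : f ∈ D.CcSpan) (hfne : f ≠ 0)
    (hsing : interior (D.s '' {g : G | f g ≠ 0}) = ∅) : D.ConditionS ℚ := by
  classical
  obtain ⟨m, V, ff, hbis, hmem, hsum⟩ := ccSpan_rep D hf
  choose K hKcomp hKV hKsupp using fun k => (hmem k).2.2
  set Wt : Fin m → Set G := fun k => D.s '' V k with hWt
  have hWtopen : ∀ k, IsOpen (Wt k) := fun k => isOpen_image_s D (hbis k)
  set sec : Fin m → G → G := fun k => secF D (V k) with hsec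
  have hsecmem : ∀ k x, x ∈ Wt k → sec k x ∈ V k ∧ D.s (sec k x) = x :=
    fun k x hx => secF_spec D hx
  have hseceq : ∀ k (g : G), g ∈ V k → sec k (D.s g) = g :=
    fun k g hg => secF_eq D (hbis k) hg rfl
  set F : Fin m → G → ℂ := fun k x => if x ∈ Wt k then ff k (sec k x) else 0 with hF
  -- F k agrees with ff k through s
  have hF1 : ∀ k (g : G), g ∈ V k → ff k g = F k (D.s g) := by
    intro k g hg
    have hx : D.s g ∈ Wt k := ⟨g, hg, rfl⟩
    simp only [hF, if_pos hx, hseceq k g hg]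
  -- continuity of F k at points of X
  have hFcont : ∀ k, ∀ x ∈ D.X, ContinuousAt (F k) x := by
    intro k x hx
    by_cases hxW : x ∈ Wt k
    · have hcont : ContinuousOn (fun y => ff k (sec k y)) (Wt k) := by
        apply ContinuousOn.comp (hmem k).1 (continuousOn_secF D (hbis k))
        intro y hy
        exact (hsecmem k y hy).1
      have hca : ContinuousAt (fun y => ff k (sec k y)) x :=
        hcont.continuousAt ((hWtopen k).mem_nhds hxW)
      apply hca.congr
      filter_upwards [(hWtopen k).mem_nhds hxW] with y hy
      simp [hF, if_pos hy]
    · -- find an open set around x where F k vanishes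
      set T : Set G := D.s '' K k with hT
      have hTcomp : IsCompact T := (hKcomp k).image D.continuous_s
      have hTX : T ⊆ D.X := by rintro _ ⟨g, _, rfl⟩; exact D.s_mem g
      have hxT : x ∉ T := fun hmemT => hxW (image_mono (f := D.s) (hKV k) hmemT)
      set T' : Set ↥D.X := Subtype.val ⁻¹' T with hT'
      have hT'comp : IsCompact T' := by
        apply Topology.IsInducing.isCompact_preimage' Topology.IsInducing.subtypeVal hTcomp
        rwa [Subtype.range_val]
      have hT'closed : IsClosed T' := hT'comp.isClosed
      set O : Set G := Subtype.val '' (T'ᶜ) with hO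
      have hOopen : IsOpen O :=
        (hXopen.isOpenEmbedding_subtypeVal).isOpenMap _ hT'closed.isOpen_compl
      have hxO : x ∈ O := ⟨⟨x, hx⟩, fun h => hxT h, rfl⟩
      have hFO : ∀ y ∈ O, F k y = 0 := by
        rintro _ ⟨⟨y, hyX⟩, hyT, rfl⟩
        simp only [hF]
        by_cases hyW : y ∈ Wt k
        · rw [if_pos hyW]
          by_contra hne
          exact hyT ⟨sec k y, hKsupp k _ hne, (hsecmem k y hyW).2⟩
        · rw [if_neg hyW]
      have hev : (fun _ : G => (0:ℂ)) =ᶠ[nhds x] F k := by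
        filter_upwards [hOopen.mem_nhds hxO] with y hy
        exact (hFO y hy).symm
      exact continuousAt_const.congr hev
  -- the global sum formula
  have hFsum : ∀ g : G, f g =
      ∑ k ∈ Finset.univ.filter (fun k => g ∈ V k), F k (D.s g) := by
    intro g
    rw [hsum g]
    rw [← Finset.sum_filter_of_ne (p := fun k => g ∈ V k)
      (fun k _ hk => by by_contra hgk; exact hk ((hmem k).2.1 g hgk))]
    exact Finset.sum_congr rfl fun k hk => hF1 k g (Finset.mem_filter.1 hk).2
  -- base point
  have hfex : ∃ g, f g ≠ 0 := Function.ne_iff.1 hfne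
  obtain ⟨g₀, hg₀⟩ := hfex
  set x₀ : G := D.s g₀ with hx₀def
  have hx₀X : x₀ ∈ D.X := D.s_mem g₀
  set C : Finset (Fin m) := Finset.univ.filter (fun k => x₀ ∈ Wt k) with hC
  have hCmem : ∀ k, k ∈ C ↔ x₀ ∈ Wt k := by
    intro k; simp [hC]
  have hFout : ∀ k, k ∉ C → F k x₀ = 0 := by
    intro k hk
    simp only [hF]
    rw [if_neg (fun h => hk ((hCmem k).2 h))]
  set Wb0 : Set G := ⋂ k ∈ C, Wt k with hWb0
  have hWb0open : IsOpen Wb0 := isOpen_biInter_finset fun k _ => hWtopen k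
  have hx₀Wb0 : x₀ ∈ Wb0 := mem_iInter₂.2 fun k hk => (hCmem k).1 hk
  have hWb0sub : ∀ k ∈ C, Wb0 ⊆ Wt k := fun k hk x hx => mem_iInter₂.1 hx k hk
  -- collision patterns
  set Pst : G → Finset (Fin m × Fin m) :=
    fun x => (C ×ˢ C).filter (fun p => sec p.1 x = sec p.2 x) with hPst
  have hPmem : ∀ x k l, (k, l) ∈ Pst x ↔ k ∈ C ∧ l ∈ C ∧ sec k x = sec l x := by
    intro x k l
    simp [hPst, Finset.mem_filter, Finset.mem_product, and_assoc]
  have hPsub : ∀ x, Pst x ⊆ C ×ˢ C := fun x => Finset.filter_subset _ _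
  -- stabilization
  set PP : Set G → Set (Finset (Fin m × Fin m)) :=
    fun A => {E | ∃ x, x ∈ Wb0 ∩ A ∧ Pst x = E} with hPP
  have hPPfin : ∀ A, (PP A).Finite := by
    intro A
    apply Set.Finite.subset ((C ×ˢ C).powerset.finite_toSet)
    rintro E ⟨x, _, hE⟩
    exact Finset.mem_coe.2 (Finset.mem_powerset.2 (hE ▸ hPsub x))
  have hMne : {j : ℕ | ∃ A : Set G, IsOpen A ∧ x₀ ∈ A ∧ (PP A).ncard = j}.Nonempty :=
    ⟨(PP univ).ncard, univ, isOpen_univ, mem_univ _, rfl⟩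
  obtain ⟨A₀, hA₀open, hx₀A₀, hA₀card⟩ := Nat.sInf_mem hMne
  have hA₀min : ∀ A : Set G, IsOpen A → x₀ ∈ A → (PP A₀).ncard ≤ (PP A).ncard := by
    intro A hA hxA
    rw [hA₀card]
    exact Nat.sInf_le ⟨A, hA, hxA, rfl⟩
  have hstab : ∀ A : Set G, IsOpen A → x₀ ∈ A → PP (A₀ ∩ A) = PP A₀ := by
    intro A hA hxA
    have hsub : PP (A₀ ∩ A) ⊆ PP A₀ := by
      rintro E ⟨x, ⟨hx1, hx2⟩, hE⟩
      exact ⟨x, ⟨hx1, hx2.1⟩, hE⟩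
    exact Set.eq_of_subset_of_ncard_le hsub
      (hA₀min (A₀ ∩ A) (hA₀open.inter hA) ⟨hx₀A₀, hxA⟩) (hPPfin A₀)
  set Wb : Set G := Wb0 ∩ A₀ with hWb
  have hWbopen : IsOpen Wb := hWb0open.inter hA₀open
  have hx₀Wb : x₀ ∈ Wb := ⟨hx₀Wb0, hx₀A₀⟩
  have hStb : ∀ x ∈ Wb, ∀ A : Set G, IsOpen A → x₀ ∈ A →
      ∃ y, (y ∈ Wb ∧ y ∈ A) ∧ Pst y = Pst x := by
    intro x hx A hA hxA
    have : Pst x ∈ PP A₀ := ⟨x, hx, rfl⟩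
    rw [← hstab A hA hxA] at this
    obtain ⟨y, ⟨hy1, hy2, hy3⟩, hyE⟩ := this
    exact ⟨y, ⟨⟨hy1, hy2⟩, hy3⟩, hyE⟩
  -- values at the base point, classes, regions
  set vv : Finset (Fin m) → ℂ := fun T => ∑ k ∈ T, F k x₀ with hvv
  set cls : Finset (Fin m × Fin m) → Fin m → Finset (Fin m) :=
    fun E k => C.filter (fun l => (k, l) ∈ E) with hcls
  have hclsC : ∀ E k, cls E k ⊆ C := fun E k => Finset.filter_subset _ _
  have hclsmem : ∀ E k l, l ∈ cls E k ↔ l ∈ C ∧ (k, l) ∈ E := by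
    intro E k l; simp [hcls]
  have hPsymm : ∀ (x : G) k l, (k,l) ∈ Pst x → (l,k) ∈ Pst x := by
    intro x k l h
    obtain ⟨h1, h2, h3⟩ := (hPmem x k l).1 h
    exact (hPmem x l k).2 ⟨h2, h1, h3.symm⟩
  have hPtrans : ∀ (x : G) k l r, (k,l) ∈ Pst x → (l,r) ∈ Pst x → (k,r) ∈ Pst x := by
    intro x k l r h h'
    obtain ⟨h1, h2, h3⟩ := (hPmem x k l).1 h
    obtain ⟨h1', h2', h3'⟩ := (hPmem x l r).1 h'
    exact (hPmem x k r).2 ⟨h1, h2', h3.trans h3'⟩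
  have hclsself : ∀ (x : G) k, k ∈ C → k ∈ cls (Pst x) k := by
    intro x k hk
    exact (hclsmem _ k k).2 ⟨hk, (hPmem x k k).2 ⟨hk, hk, rfl⟩⟩
  have hclseq : ∀ (x : G) k l, (k,l) ∈ Pst x → cls (Pst x) k = cls (Pst x) l := by
    intro x k l h
    ext r
    rw [hclsmem, hclsmem]
    constructor
    · rintro ⟨hr, hkr⟩; exact ⟨hr, hPtrans x l k r (hPsymm x k l h) hkr⟩
    · rintro ⟨hr, hlr⟩; exact ⟨hr, hPtrans x k l r h hlr⟩
  have hminrep : ∀ (x : G) l, l ∈ C → ∃ q, q ∈ cls (Pst x) l ∧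
      cls (Pst x) q = cls (Pst x) l ∧ (∀ r ∈ cls (Pst x) q, q ≤ r) := by
    intro x l hl
    have hne : (cls (Pst x) l).Nonempty := ⟨l, hclsself x l hl⟩
    refine ⟨(cls (Pst x) l).min' hne, (cls (Pst x) l).min'_mem hne, ?_, ?_⟩
    · exact (hclseq x l _ ((hclsmem _ l _).1 ((cls (Pst x) l).min'_mem hne)).2).symm
    · intro r hr
      apply (cls (Pst x) l).min'_le
      rwa [hclseq x l _ ((hclsmem _ l _).1 ((cls (Pst x) l).min'_mem hne)).2]
  -- the open region where all pairs of E are glued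
  set OE : Finset (Fin m × Fin m) → Set G := fun E => ⋂ p ∈ E, D.s '' (V p.1 ∩ V p.2)
    with hOEdef
  have hOEopen : ∀ E, IsOpen (OE E) := fun E => isOpen_biInter_finset fun p _ =>
    (hbis p.1).2.2.2.2 _ inter_subset_left ((hbis p.1).1.inter (hbis p.2).1)
  have hOE1 : ∀ E (x : G), x ∈ OE E → ∀ p ∈ E, sec p.1 x = sec p.2 x := by
    intro E x hx p hp
    obtain ⟨g, ⟨hg1, hg2⟩, hgs⟩ := mem_iInter₂.1 hx p hp
    rw [← hgs, hseceq p.1 g hg1, hseceq p.2 g hg2]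
  have hOE2 : ∀ x ∈ Wb0, x ∈ OE (Pst x) := by
    intro x hx
    apply mem_iInter₂.2; intro p hp
    have hp' : (p.1, p.2) ∈ Pst x := by rwa [Prod.mk.eta]
    obtain ⟨h1, h2, h3⟩ := (hPmem x p.1 p.2).1 hp'
    refine ⟨sec p.1 x, ⟨(hsecmem p.1 x (hWb0sub p.1 h1 hx)).1, ?_⟩,
      (hsecmem p.1 x (hWb0sub p.1 h1 hx)).2⟩
    rw [h3]; exact (hsecmem p.2 x (hWb0sub p.2 h2 hx)).1
  -- the fiber formula
  have hFfib : ∀ (x : G) k, k ∈ C → x ∈ Wb0 → f (sec k x) =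
      ∑ l ∈ Finset.univ.filter (fun l => x ∈ Wt l ∧ sec l x = sec k x), F l x := by
    intro x k hk hx
    have hxk : x ∈ Wt k := hWb0sub k hk hx
    have hsg : D.s (sec k x) = x := (hsecmem k x hxk).2
    rw [hFsum (sec k x), hsg]
    apply Finset.sum_congr ?_ (fun l _ => rfl)
    ext l
    simp only [Finset.mem_filter, Finset.mem_univ, true_and]
    constructor
    · intro hl
      have hxl : x ∈ Wt l := ⟨sec k x, hl, hsg⟩
      refine ⟨hxl, ?_⟩
      have := hseceq l (sec k x) hl
      rwa [hsg] at this
    · rintro ⟨hxl, hl⟩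
      rw [← hl]; exact (hsecmem l x hxl).1
  -- representatives
  set reps : Finset (Fin m × Fin m) → Finset (Fin m) :=
    fun E => C.filter (fun k => vv (cls E k) ≠ 0 ∧ ∀ l ∈ cls E k, k ≤ l) with hreps
  set zreps : Finset (Fin m × Fin m) → Finset (Fin m) :=
    fun E => C.filter (fun k => vv (cls E k) = 0 ∧ ∀ l ∈ cls E k, k ≤ l) with hzreps
  set slk : Finset (Fin m × Fin m) → G → ℝ := fun E x =>
    (∑ q ∈ zreps E, norm (∑ l ∈ cls E q, F l x)) +
      ∑ l ∈ Finset.univ \ C, norm (F l x) with hslk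
  set Astar : Finset (Fin m × Fin m) → Set G := fun E =>
    D.X ∩ ⋂ k ∈ reps E, {x : G | slk E x < norm (∑ l ∈ cls E k, F l x)} with hAstardef
  have hAstaropen : ∀ E, IsOpen (Astar E) := by
    intro E
    rw [isOpen_iff_mem_nhds]
    rintro x ⟨hxX, hxlt⟩
    apply Filter.inter_mem (hXopen.mem_nhds hxX)
    rw [Filter.biInter_finset_mem]
    intro k hk
    have hxk : slk E x < norm (∑ l ∈ cls E k, F l x) := by
      have := mem_iInter₂.1 hxlt k hk; exact this
    have hcont : ContinuousAt (fun y => norm (∑ l ∈ cls E k, F l y) - slk E y) x := by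
      apply ContinuousAt.sub
      · exact continuous_norm.continuousAt.comp
          (tendsto_finset_sum _ fun l _ => hFcont l x hxX)
      · apply ContinuousAt.add
        · exact tendsto_finset_sum _ fun q _ =>
            continuous_norm.continuousAt.comp
              (tendsto_finset_sum _ fun l _ => hFcont l x hxX)
        · exact tendsto_finset_sum _ fun l _ =>
            continuous_norm.continuousAt.comp (hFcont l x hxX)
    have hpos : (0:ℝ) < norm (∑ l ∈ cls E k, F l x) - slk E x := by linarith
    have hmem := hcont.preimage_mem_nhds (isOpen_Ioi.mem_nhds hpos)
    apply Filter.mem_of_superset hmem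
    intro y hy
    simp only [mem_preimage, mem_Ioi, sub_pos] at hy
    exact hy
  have hx₀Astar : ∀ E, x₀ ∈ Astar E := by
    intro E
    refine ⟨hx₀X, mem_iInter₂.2 fun k hk => ?_⟩
    have h1 : slk E x₀ = 0 := by
      simp only [hslk]
      have e1 : ∀ q ∈ zreps E, norm (∑ l ∈ cls E q, F l x₀) = 0 := by
        intro q hq
        have : (∑ l ∈ cls E q, F l x₀) = vv (cls E q) := rfl
        rw [this, (Finset.mem_filter.1 hq).2.1]
        simp
      have e2 : ∀ l ∈ Finset.univ \ C, norm (F l x₀) = 0 := by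
        intro l hl
        rw [hFout l (Finset.mem_sdiff.1 hl).2]
        simp
      rw [Finset.sum_congr rfl e1, Finset.sum_congr rfl e2]
      simp
    have h2 : vv (cls E k) ≠ 0 := (Finset.mem_filter.1 hk).2.1
    show slk E x₀ < norm (∑ l ∈ cls E k, F l x₀)
    rw [h1]
    have : (∑ l ∈ cls E k, F l x₀) = vv (cls E k) := rfl
    rw [this]
    exact norm_pos_iff.2 h2
  -- the key estimate
  have hKey : ∀ (w : G) (x : G), x ∈ Wb0 → x ∈ OE (Pst w) → x ∈ Astar (Pst w) →
      ∀ k, k ∈ reps (Pst w) →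
      (∀ l ∈ reps (Pst w), l ≠ k → sec l x ≠ sec k x) → f (sec k x) ≠ 0 := by
    intro w x hxWb0 hxOE hxA k hkrep hsep
    obtain ⟨hkC, hkv, hkmin⟩ := Finset.mem_filter.1 hkrep
    set T := Finset.univ.filter (fun l => x ∈ Wt l ∧ sec l x = sec k x) with hTdef
    have hfib : f (sec k x) = ∑ l ∈ T, F l x := hFfib x k hkC hxWb0
    have hclsT : cls (Pst w) k ⊆ T := by
      intro l hl
      obtain ⟨hlC, hkl⟩ := (hclsmem _ k l).1 hl
      exact Finset.mem_filter.2 ⟨Finset.mem_univ l, hWb0sub l hlC hxWb0,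
        (hOE1 (Pst w) x hxOE (k,l) hkl).symm⟩
    have hsplit : ∑ l ∈ T \ cls (Pst w) k, F l x + ∑ l ∈ cls (Pst w) k, F l x
        = ∑ l ∈ T, F l x := Finset.sum_sdiff hclsT
    set Q := (zreps (Pst w)).filter (fun q => sec q x = sec k x) with hQdef
    have hdecomp : (T \ cls (Pst w) k).filter (fun l => l ∈ C) = Q.biUnion (cls (Pst w)) := by
      ext l
      simp only [Finset.mem_filter, Finset.mem_sdiff, Finset.mem_biUnion, hTdef,
        Finset.mem_univ, true_and]
      constructor
      · rintro ⟨⟨⟨hxWtl, hlsec⟩, hlncls⟩, hlC⟩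
        obtain ⟨q, hq1, hq2, hq3⟩ := hminrep w l hlC
        have hqC : q ∈ C := (hclsmem _ l q).1 hq1 |>.1
        have hlq : (l, q) ∈ Pst w := (hclsmem _ l q).1 hq1 |>.2
        have hqsec : sec q x = sec l x := (hOE1 (Pst w) x hxOE (l,q) hlq).symm
        have hqv : vv (cls (Pst w) q) = 0 := by
          by_contra hv
          have hqrep : q ∈ reps (Pst w) := Finset.mem_filter.2 ⟨hqC, hv, hq3⟩
          have hqk : q ≠ k := by
            rintro rfl
            apply hlncls
            rw [hq2]; exact hclsself w l hlC
          exact hsep q hqrep hqk (by rw [hqsec, hlsec])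
        refine ⟨q, Finset.mem_filter.2 ⟨Finset.mem_filter.2 ⟨hqC, hqv, hq3⟩,
          by rw [hqsec, hlsec]⟩, ?_⟩
        rw [hq2]; exact hclsself w l hlC
      · rintro ⟨q, hq, hlq⟩
        have hqz : q ∈ zreps (Pst w) := (Finset.mem_filter.1 hq).1
        have hqsec : sec q x = sec k x := (Finset.mem_filter.1 hq).2
        have hqC : q ∈ C := (Finset.mem_filter.1 hqz).1
        obtain ⟨hlC, hql⟩ := (hclsmem _ q l).1 hlq
        have hlsec : sec l x = sec k x := by
          rw [← hOE1 (Pst w) x hxOE (q,l) hql]; exact hqsec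
        refine ⟨⟨⟨hWb0sub l hlC hxWb0, hlsec⟩, ?_⟩, hlC⟩
        intro hlk
        have h1 : cls (Pst w) k = cls (Pst w) l := hclseq w k l ((hclsmem _ k l).1 hlk).2
        have h2 : cls (Pst w) q = cls (Pst w) l := hclseq w q l hql
        exact hkv (by rw [h1, ← h2, (Finset.mem_filter.1 hqz).2.1])
    have hdisj : (↑Q : Set (Fin m)).PairwiseDisjoint (cls (Pst w)) := by
      intro q1 hq1 q2 hq2 hne
      simp only [Function.onFun]
      rw [Finset.disjoint_left]
      intro l hl1 hl2
      apply hne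
      have e1 : (q1, l) ∈ Pst w := ((hclsmem _ q1 l).1 hl1).2
      have e2 : (q2, l) ∈ Pst w := ((hclsmem _ q2 l).1 hl2).2
      have e3 : cls (Pst w) q1 = cls (Pst w) q2 := by
        rw [hclseq w q1 l e1, hclseq w q2 l e2]
      have hq1z := (Finset.mem_filter.1 (Finset.mem_coe.1 hq1)).1
      have hq2z := (Finset.mem_filter.1 (Finset.mem_coe.1 hq2)).1
      have m1 := (Finset.mem_filter.1 hq1z).2.2
      have m2 := (Finset.mem_filter.1 hq2z).2.2
      have i12 : q1 ≤ q2 := m1 q2 (by rw [e3]; exact hclsself w q2 (Finset.mem_filter.1 hq2z).1)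
      have i21 : q2 ≤ q1 := m2 q1 (by rw [← e3]; exact hclsself w q1 (Finset.mem_filter.1 hq1z).1)
      exact le_antisymm i12 i21
    have habs1 : norm (∑ l ∈ T \ cls (Pst w) k, F l x) ≤ slk (Pst w) x := by
      have e1 : ∑ l ∈ T \ cls (Pst w) k, F l x
          = (∑ l ∈ (T \ cls (Pst w) k).filter (fun l => l ∈ C), F l x)
            + ∑ l ∈ (T \ cls (Pst w) k).filter (fun l => ¬ l ∈ C), F l x :=
        (Finset.sum_filter_add_sum_filter_not _ _ _).symm
      rw [e1]
      refine le_trans (norm_add_le _ _) ?_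
      have b1 : norm (∑ l ∈ (T \ cls (Pst w) k).filter (fun l => l ∈ C), F l x)
          ≤ ∑ q ∈ zreps (Pst w), norm (∑ l ∈ cls (Pst w) q, F l x) := by
        rw [hdecomp, Finset.sum_biUnion hdisj]
        refine le_trans (norm_sum_le _ _) ?_
        apply Finset.sum_le_sum_of_subset_of_nonneg (Finset.filter_subset _ _)
        intro q _ _
        exact norm_nonneg _
      have b2 : norm (∑ l ∈ (T \ cls (Pst w) k).filter (fun l => ¬ l ∈ C), F l x)
          ≤ ∑ l ∈ Finset.univ \ C, norm (F l x) := by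
        refine le_trans (norm_sum_le _ _) ?_
        apply Finset.sum_le_sum_of_subset_of_nonneg
        · intro l hl
          exact Finset.mem_sdiff.2 ⟨Finset.mem_univ l, (Finset.mem_filter.1 hl).2⟩
        · intro l _ _
          exact norm_nonneg _
      calc norm (∑ l ∈ (T \ cls (Pst w) k).filter (fun l => l ∈ C), F l x)
            + norm (∑ l ∈ (T \ cls (Pst w) k).filter (fun l => ¬ l ∈ C), F l x)
          ≤ _ + _ := add_le_add b1 b2
        _ = slk (Pst w) x := rfl
    have hgap : slk (Pst w) x < norm (∑ l ∈ cls (Pst w) k, F l x) := by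
      have := mem_iInter₂.1 hxA.2 k hkrep
      exact this
    intro h0
    rw [hfib] at h0
    have hAk : ∑ l ∈ cls (Pst w) k, F l x = - ∑ l ∈ T \ cls (Pst w) k, F l x := by
      have h0' : ∑ l ∈ T \ cls (Pst w) k, F l x + ∑ l ∈ cls (Pst w) k, F l x = 0 := by
        rw [hsplit, h0]
      exact eq_neg_of_add_eq_zero_right h0'
    rw [hAk] at hgap
    have : norm (- ∑ l ∈ T \ cls (Pst w) k, F l x)
        = norm (∑ l ∈ T \ cls (Pst w) k, F l x) := by simp
    rw [this] at hgap
    linarith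
  -- exact witnesses near the base point
  have hwit : ∀ w ∈ Wb, ∀ A : Set G, IsOpen A → x₀ ∈ A →
      ∃ y, y ∈ Wb ∧ y ∈ A ∧ y ∈ OE (Pst w) ∧ y ∈ Astar (Pst w) ∧ Pst y = Pst w := by
    intro w hw A hA hxA
    obtain ⟨y, ⟨hyWb, hyA⟩, hyP⟩ := hStb w hw (A ∩ Astar (Pst w))
      (hA.inter (hAstaropen _)) ⟨hxA, hx₀Astar _⟩
    refine ⟨y, hyWb, hyA.1, ?_, hyA.2, hyP⟩
    have := hOE2 y hyWb.1
    rwa [hyP] at this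
  -- the main construction, assuming no "bad" gluing
  have hmain : ∀ w, w ∈ Wb → (∃ k ∈ C, vv (cls (Pst w) k) ≠ 0) →
      (∀ x, x ∈ Wb → x ∈ OE (Pst w) → x ∈ Astar (Pst w) →
        ∀ k, k ∈ reps (Pst w) → ∀ l, l ∈ reps (Pst w) → l ≠ k → sec l x = sec k x →
        vv (cls (Pst x) k) = 0) → D.ConditionS ℚ := by
    intro w hw hkeep hnobad
    obtain ⟨k0, hk0C, hk0v⟩ := hkeep
    obtain ⟨q0, hq01, hq02, hq03⟩ := hminrep w k0 hk0C
    have hq0C : q0 ∈ C := ((hclsmem _ k0 q0).1 hq01).1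
    have hq0rep : q0 ∈ reps (Pst w) := Finset.mem_filter.2
      ⟨hq0C, by rw [hq02]; exact hk0v, hq03⟩
    set R : Set G := Wb ∩ (OE (Pst w) ∩ Astar (Pst w)) with hRdef
    have hRopen : IsOpen R := hWbopen.inter ((hOEopen _).inter (hAstaropen _))
    have hRWb0 : R ⊆ Wb0 := fun x hx => hx.1.1
    have hRWt : ∀ k ∈ C, R ⊆ Wt k := fun k hk x hx => hWb0sub k hk (hRWb0 hx)
    by_cases hcard : (reps (Pst w)).card = 1
    · -- a single class: contradiction with singularity of f
      exfalso
      obtain ⟨k, hk⟩ := Finset.card_eq_one.1 hcard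
      have hkrep : k ∈ reps (Pst w) := by rw [hk]; exact Finset.mem_singleton_self k
      have hRsub : R ⊆ D.s '' {g : G | f g ≠ 0} := by
        rintro x ⟨hx1, hx2, hx3⟩
        have hsep : ∀ l ∈ reps (Pst w), l ≠ k → sec l x ≠ sec k x := by
          intro l hl hlk
          rw [hk, Finset.mem_singleton] at hl
          exact absurd hl hlk
        have hfx := hKey w x hx1.1 hx2 hx3 k hkrep hsep
        exact ⟨sec k x, hfx,
          (hsecmem k x (hWb0sub k (Finset.mem_filter.1 hkrep).1 hx1.1)).2⟩
      have hRint : R ⊆ interior (D.s '' {g : G | f g ≠ 0}) :=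
        hRopen.subset_interior_iff.2 hRsub
      rw [hsing] at hRint
      obtain ⟨y, h1, _, h3, h4, _⟩ := hwit w hw univ isOpen_univ (mem_univ _)
      exact hRint ⟨h1, h3, h4⟩
    · -- at least two classes: build the witness family
      have hrepne : (reps (Pst w)).Nonempty := ⟨q0, hq0rep⟩
      have hcard2 : 1 < (reps (Pst w)).card := by
        have := hrepne.card_pos
        omega
      set er : Fin (reps (Pst w)).card → Fin m :=
        fun i => ((reps (Pst w)).equivFin.symm i).1 with her
      have her_mem : ∀ i, er i ∈ reps (Pst w) := fun i => ((reps (Pst w)).equivFin.symm i).2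
      have her_C : ∀ i, er i ∈ C := fun i => (Finset.mem_filter.1 (her_mem i)).1
      have her_inj : Function.Injective er := by
        intro i j hij
        exact (reps (Pst w)).equivFin.symm.injective (Subtype.ext hij)
      have her_surj : ∀ k ∈ reps (Pst w), ∃ i, er i = k := by
        intro k hk
        refine ⟨(reps (Pst w)).equivFin ⟨k, hk⟩, ?_⟩
        simp only [her, Equiv.symm_apply_apply]
      have hrepdist : ∀ y, Pst y = Pst w → ∀ i j, sec (er i) y = sec (er j) y → i = j := by
        intro y hyP i j hsij
        have hmemP : (er i, er j) ∈ Pst y := (hPmem y _ _).2 ⟨her_C i, her_C j, hsij⟩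
        rw [hyP] at hmemP
        have hji : er j ∈ cls (Pst w) (er i) := (hclsmem _ _ _).2 ⟨her_C j, hmemP⟩
        have h1 : er i ≤ er j := (Finset.mem_filter.1 (her_mem i)).2.2 _ hji
        have hcls' : cls (Pst w) (er i) = cls (Pst w) (er j) := hclseq w _ _ hmemP
        have hij' : er i ∈ cls (Pst w) (er j) := by
          rw [← hcls']; exact hclsself w _ (her_C i)
        have h2 : er j ≤ er i := (Finset.mem_filter.1 (her_mem j)).2.2 _ hij'
        exact her_inj (le_antisymm h1 h2)
      -- membership helpers for the family
      have hUUmem : ∀ (i : Fin (reps (Pst w)).card) (x : G), x ∈ R →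
          sec (er i) x ∈ V (er i) ∩ D.s ⁻¹' R := by
        intro i x hx
        have hxWt : x ∈ Wt (er i) := hRWt _ (her_C i) hx
        exact ⟨(hsecmem _ x hxWt).1, by
          rw [mem_preimage, (hsecmem _ x hxWt).2]; exact hx⟩
      have hUUuniq : ∀ (i : Fin (reps (Pst w)).card) (g : G),
          g ∈ V (er i) ∩ D.s ⁻¹' R → g = sec (er i) (D.s g) := by
        intro i g hg
        exact (hseceq _ g hg.1).symm
      refine ⟨(reps (Pst w)).card, fun i => V (er i) ∩ D.s ⁻¹' R, by omega, ?_, ?_, ?_, ?_, ?_⟩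
      · intro i
        exact bisection_inter_preimage D (hbis (er i)) hRopen
      · intro i j
        rw [image_s_inter_preimage, image_s_inter_preimage]
        rw [inter_eq_right.2 (hRWt _ (her_C i)), inter_eq_right.2 (hRWt _ (her_C j))]
      · -- nonemptiness of the differences
        intro i
        obtain ⟨y, h1, _, h3, h4, h5⟩ := hwit w hw univ isOpen_univ (mem_univ _)
        have hyR : y ∈ R := ⟨h1, h3, h4⟩
        refine ⟨sec (er i) y, hUUmem i y hyR, ?_⟩
        intro hmem'
        obtain ⟨j, hj⟩ := mem_iUnion.1 hmem'
        obtain ⟨hji, hjU⟩ := mem_iUnion.1 hj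
        have hy' : D.s (sec (er i) y) = y := (hsecmem _ y (hRWt _ (her_C i) hyR)).2
        have : sec (er i) y = sec (er j) y := by
          have := hUUuniq j _ hjU
          rwa [hy'] at this
        exact hji (hrepdist y h5 j i this.symm)
      · -- empty interior of the differences
        intro i
        have hsubS : (V (er i) ∩ D.s ⁻¹' R) \
            (⋃ (j) (_ : j ≠ i), V (er j) ∩ D.s ⁻¹' R) ⊆ {g : G | f g ≠ 0} := by
          rintro g ⟨hgU, hgnot⟩
          have hxR : D.s g ∈ R := hgU.2
          have hgsec : g = sec (er i) (D.s g) := hUUuniq i g hgU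
          have hsep : ∀ l ∈ reps (Pst w), l ≠ er i → sec l (D.s g) ≠ sec (er i) (D.s g) := by
            intro l hl hlne hsecl
            obtain ⟨j, rfl⟩ := her_surj l hl
            have hji : j ≠ i := fun h => hlne (by rw [h])
            apply hgnot
            refine mem_iUnion.2 ⟨j, mem_iUnion.2 ⟨hji, ?_, ?_⟩⟩
            · rw [← hgsec] at hsecl
              rw [← hsecl]
              exact (hsecmem _ (D.s g) (hRWt _ (her_C j) hxR)).1
            · rw [mem_preimage]
              rw [← hgsec] at hsecl
              rw [← hsecl, (hsecmem _ (D.s g) (hRWt _ (her_C j) hxR)).2]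
              exact hxR
          have := hKey w (D.s g) (hRWb0 hxR) hxR.2.1 hxR.2.2 (er i) (her_mem i) hsep
          rw [← hgsec] at this
          exact this
        rw [eq_empty_iff_forall_notMem]
        intro g hg
        have hOsub : interior ((V (er i) ∩ D.s ⁻¹' R) \
            (⋃ (j) (_ : j ≠ i), V (er j) ∩ D.s ⁻¹' R)) ⊆ V (er i) :=
          interior_subset.trans (fun z hz => hz.1.1)
        have himg : D.s '' interior ((V (er i) ∩ D.s ⁻¹' R) \
            (⋃ (j) (_ : j ≠ i), V (er j) ∩ D.s ⁻¹' R)) ⊆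
            interior (D.s '' {g : G | f g ≠ 0}) := by
          apply IsOpen.subset_interior_iff (((hbis (er i)).2.2.2.2 _ hOsub
            isOpen_interior)) |>.2
          exact image_mono (f := D.s) (interior_subset.trans hsubS)
        rw [hsing] at himg
        exact himg ⟨g, hg, rfl⟩
      · -- the span condition
        set φl : (Fin (reps (Pst w)).card → ℚ) →ₗ[ℚ] ℂ :=
          { toFun := fun b => ∑ i, (b i : ℂ) * vv (cls (Pst w) (er i)),
            map_add' := by
              intro a b
              simp only [Pi.add_apply, Rat.cast_add, add_mul, Finset.sum_add_distrib]
            map_smul' := by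
              intro q b
              simp only [Pi.smul_apply, smul_eq_mul, Rat.cast_mul, RingHom.id_apply,
                Finset.mul_sum, mul_assoc, Rat.smul_def] } with hφl
        intro htop
        have hle : (⊤ : Submodule ℚ (Fin (reps (Pst w)).card → ℚ)) ≤ LinearMap.ker φl := by
          rw [← htop]
          apply Submodule.span_le.2
          rintro b ⟨I, hI, ⟨g, hg⟩, rfl⟩
          rw [SetLike.mem_coe, LinearMap.mem_ker]
          have heval : φl (fun i => if i ∈ I then (1:ℚ) else 0)
              = ∑ i ∈ I, vv (cls (Pst w) (er i)) := by
            simp only [hφl, LinearMap.coe_mk, AddHom.coe_mk]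
            rw [Finset.sum_congr rfl (fun i _ => by
              rw [apply_ite (fun q : ℚ => (q : ℂ)), Rat.cast_one, Rat.cast_zero, ite_mul,
                one_mul, zero_mul] :
              ∀ i ∈ Finset.univ, ((if i ∈ I then (1:ℚ) else 0 : ℚ) : ℂ) * vv (cls (Pst w) (er i))
                = if i ∈ I then vv (cls (Pst w) (er i)) else 0)]
            rw [Finset.sum_ite_mem, Finset.univ_inter]
          rw [heval]
          -- pick two distinct indices in I
          obtain ⟨i₁, hi₁⟩ := Finset.card_pos.1 (lt_trans zero_lt_one hI)
          obtain ⟨i₂, hi₂, hi₂ne⟩ := Finset.exists_mem_ne hI i₁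
          have hgI : ∀ i ∈ I, g ∈ V (er i) ∩ D.s ⁻¹' R := fun i hi => mem_iInter₂.1 hg.1 i hi
          have hxR : D.s g ∈ R := (hgI i₁ hi₁).2
          have hsecg : ∀ i ∈ I, sec (er i) (D.s g) = g := fun i hi => hseceq _ g (hgI i hi).1
          have h0 : vv (cls (Pst (D.s g)) (er i₁)) = 0 :=
            hnobad (D.s g) hxR.1 hxR.2.1 hxR.2.2 (er i₁) (her_mem i₁) (er i₂) (her_mem i₂)
              (fun h => hi₂ne (her_inj h)) (by rw [hsecg i₂ hi₂, hsecg i₁ hi₁])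
          set QQ := C.filter (fun q => (∀ r ∈ cls (Pst w) q, q ≤ r) ∧ sec q (D.s g) = g)
            with hQQ
          have hA : cls (Pst (D.s g)) (er i₁) = QQ.biUnion (cls (Pst w)) := by
            ext l
            constructor
            · intro hl
              obtain ⟨hlC, hl2⟩ := (hclsmem _ _ l).1 hl
              have hlsec : sec l (D.s g) = g := by
                have h3 := ((hPmem (D.s g) (er i₁) l).1 hl2).2.2
                rw [← h3, hsecg i₁ hi₁]
              obtain ⟨q, hq1, hq2, hq3⟩ := hminrep w l hlC
              have hqC : q ∈ C := ((hclsmem _ l q).1 hq1).1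
              have hlq : (l, q) ∈ Pst w := ((hclsmem _ l q).1 hq1).2
              have hqsec : sec q (D.s g) = g := by
                rw [← hOE1 (Pst w) (D.s g) hxR.2.1 (l, q) hlq]
                exact hlsec
              refine Finset.mem_biUnion.2 ⟨q, Finset.mem_filter.2 ⟨hqC, hq3, hqsec⟩, ?_⟩
              rw [hq2]; exact hclsself w l hlC
            · intro hl
              obtain ⟨q, hq, hlq⟩ := Finset.mem_biUnion.1 hl
              obtain ⟨hqC, hqmin, hqsec⟩ := Finset.mem_filter.1 hq
              obtain ⟨hlC, hql⟩ := (hclsmem _ q l).1 hlq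
              have hlsec : sec l (D.s g) = g := by
                rw [← hOE1 (Pst w) (D.s g) hxR.2.1 (q, l) hql]
                exact hqsec
              apply (hclsmem _ _ l).2
              refine ⟨hlC, (hPmem _ _ _).2 ⟨her_C i₁, hlC, ?_⟩⟩
              rw [hsecg i₁ hi₁, hlsec]
          have hdisj2 : (↑QQ : Set (Fin m)).PairwiseDisjoint (cls (Pst w)) := by
            intro q1 hq1 q2 hq2 hne
            simp only [Function.onFun]
            rw [Finset.disjoint_left]
            intro l hl1 hl2
            apply hne
            have e1 : (q1, l) ∈ Pst w := ((hclsmem _ q1 l).1 hl1).2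
            have e2 : (q2, l) ∈ Pst w := ((hclsmem _ q2 l).1 hl2).2
            have e3 : cls (Pst w) q1 = cls (Pst w) q2 := by
              rw [hclseq w q1 l e1, hclseq w q2 l e2]
            obtain ⟨hq1C, hq1min, _⟩ := Finset.mem_filter.1 (Finset.mem_coe.1 hq1)
            obtain ⟨hq2C, hq2min, _⟩ := Finset.mem_filter.1 (Finset.mem_coe.1 hq2)
            have i12 : q1 ≤ q2 := hq1min q2 (by rw [e3]; exact hclsself w q2 hq2C)
            have i21 : q2 ≤ q1 := hq2min q1 (by rw [← e3]; exact hclsself w q1 hq1C)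
            exact le_antisymm i12 i21
          have hsum1 : vv (cls (Pst (D.s g)) (er i₁)) = ∑ q ∈ QQ, vv (cls (Pst w) q) := by
            rw [hA]
            simp only [hvv]
            exact Finset.sum_biUnion hdisj2
          have hsum2 : ∑ q ∈ QQ, vv (cls (Pst w) q)
              = ∑ q ∈ QQ.filter (fun q => vv (cls (Pst w) q) ≠ 0), vv (cls (Pst w) q) :=
            (Finset.sum_filter_of_ne (fun q _ hne => hne)).symm
          have hB : QQ.filter (fun q => vv (cls (Pst w) q) ≠ 0) = I.image er := by
            ext q
            constructor
            · intro hq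
              obtain ⟨hqQQ, hqv⟩ := Finset.mem_filter.1 hq
              obtain ⟨hqC, hqmin, hqsec⟩ := Finset.mem_filter.1 hqQQ
              have hqrep : q ∈ reps (Pst w) := Finset.mem_filter.2 ⟨hqC, hqv, hqmin⟩
              obtain ⟨j, rfl⟩ := her_surj q hqrep
              refine Finset.mem_image.2 ⟨j, ?_, rfl⟩
              by_contra hjI
              apply hg.2
              refine mem_iUnion.2 ⟨j, mem_iUnion.2 ⟨hjI, ?_, ?_⟩⟩
              · rw [← hqsec]; exact (hsecmem _ _ (hRWt _ (her_C j) hxR)).1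
              · rw [mem_preimage, ← hqsec, (hsecmem _ _ (hRWt _ (her_C j) hxR)).2]
                exact hxR
            · intro hq
              obtain ⟨j, hjI, rfl⟩ := Finset.mem_image.1 hq
              exact Finset.mem_filter.2 ⟨Finset.mem_filter.2 ⟨her_C j,
                (Finset.mem_filter.1 (her_mem j)).2.2, hsecg j hjI⟩,
                (Finset.mem_filter.1 (her_mem j)).2.1⟩
          have hsum3 : ∑ q ∈ I.image er, vv (cls (Pst w) q)
              = ∑ i ∈ I, vv (cls (Pst w) (er i)) :=
            Finset.sum_image (fun i _ j _ h => her_inj h)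
          rw [← hsum3, ← hB, ← hsum2, ← hsum1, h0]
        have hi₀lt : (0 : ℕ) < (reps (Pst w)).card := by omega
        have h1 := hle (Submodule.mem_top (x := fun j => if j = (⟨0, hi₀lt⟩ :
          Fin (reps (Pst w)).card) then (1:ℚ) else 0))
        rw [LinearMap.mem_ker] at h1
        have h2 : φl (fun j => if j = (⟨0, hi₀lt⟩ : Fin (reps (Pst w)).card) then (1:ℚ) else 0)
            = vv (cls (Pst w) (er ⟨0, hi₀lt⟩)) := by
          simp only [hφl, LinearMap.coe_mk, AddHom.coe_mk]
          rw [Finset.sum_eq_single (⟨0, hi₀lt⟩ : Fin (reps (Pst w)).card)]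
          · rw [if_pos rfl, Rat.cast_one, one_mul]
          · intro b _ hb
            rw [if_neg hb, Rat.cast_zero, zero_mul]
          · intro hb
            exact absurd (Finset.mem_univ _) hb
        rw [h2] at h1
        exact (Finset.mem_filter.1 (her_mem ⟨0, hi₀lt⟩)).2.1 h1


  -- a bad gluing produces a strictly larger pattern
  have hbadrec : ∀ w, w ∈ Wb →
      (∃ x, (x ∈ Wb ∧ x ∈ OE (Pst w) ∧ x ∈ Astar (Pst w)) ∧ ∃ k, k ∈ reps (Pst w) ∧
        ∃ l, l ∈ reps (Pst w) ∧ l ≠ k ∧ sec l x = sec k x ∧ vv (cls (Pst x) k) ≠ 0) →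
      ∃ x', x' ∈ Wb ∧ (∃ k ∈ C, vv (cls (Pst x') k) ≠ 0) ∧ Pst w ⊂ Pst x' := by
    rintro w hw ⟨x, ⟨hx1, hx2, _⟩, k, hk, l, hl, hlk, hsec', hv⟩
    refine ⟨x, hx1, ⟨k, (Finset.mem_filter.1 hk).1, hv⟩, ?_⟩
    constructor
    · intro p hp
      have hp1 : (p.1, p.2) ∈ Pst w := by rwa [Prod.mk.eta]
      obtain ⟨h1, h2, _⟩ := (hPmem w p.1 p.2).1 hp1
      have : (p.1, p.2) ∈ Pst x :=
        (hPmem x p.1 p.2).2 ⟨h1, h2, hOE1 (Pst w) x hx2 p hp⟩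
      rwa [Prod.mk.eta] at this
    · intro hsub
      have hkl : (k, l) ∈ Pst x := (hPmem x k l).2 ⟨(Finset.mem_filter.1 hk).1,
        (Finset.mem_filter.1 hl).1, hsec'.symm⟩
      have hklw := hsub hkl
      have hlcls : l ∈ cls (Pst w) k :=
        (hclsmem _ k l).2 ⟨(Finset.mem_filter.1 hl).1, hklw⟩
      have h1 : k ≤ l := (Finset.mem_filter.1 hk).2.2 l hlcls
      have hclseq' := hclseq w k l hklw
      have hkcls : k ∈ cls (Pst w) l := by
        rw [← hclseq']; exact hclsself w k (Finset.mem_filter.1 hk).1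
      have h2 : l ≤ k := (Finset.mem_filter.1 hl).2.2 k hkcls
      exact hlk (le_antisymm h2 h1)
  -- strong induction on the pattern size
  have hcore : ∀ N : ℕ, ∀ w, w ∈ Wb → (∃ k ∈ C, vv (cls (Pst w) k) ≠ 0) →
      (C ×ˢ C).card ≤ N + (Pst w).card → D.ConditionS ℚ := by
    intro N
    induction N with
    | zero =>
      intro w hw hkeep hcard
      by_cases hbad : ∃ x, (x ∈ Wb ∧ x ∈ OE (Pst w) ∧ x ∈ Astar (Pst w)) ∧
          ∃ k, k ∈ reps (Pst w) ∧ ∃ l, l ∈ reps (Pst w) ∧ l ≠ k ∧ sec l x = sec k x ∧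
            vv (cls (Pst x) k) ≠ 0
      · obtain ⟨x', _, _, hss⟩ := hbadrec w hw hbad
        have c1 : (Pst w).card < (Pst x').card := Finset.card_lt_card hss
        have c2 : (Pst x').card ≤ (C ×ˢ C).card := Finset.card_le_card (hPsub x')
        omega
      · apply hmain w hw hkeep
        intro x hx1 hx2 hx3 k hk l hl hlk hsec'
        by_contra hv
        exact hbad ⟨x, ⟨hx1, hx2, hx3⟩, k, hk, l, hl, hlk, hsec', hv⟩
    | succ N IH =>
      intro w hw hkeep hcard
      by_cases hbad : ∃ x, (x ∈ Wb ∧ x ∈ OE (Pst w) ∧ x ∈ Astar (Pst w)) ∧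
          ∃ k, k ∈ reps (Pst w) ∧ ∃ l, l ∈ reps (Pst w) ∧ l ≠ k ∧ sec l x = sec k x ∧
            vv (cls (Pst x) k) ≠ 0
      · obtain ⟨x', hx'1, hx'keep, hss⟩ := hbadrec w hw hbad
        apply IH x' hx'1 hx'keep
        have c1 : (Pst w).card < (Pst x').card := Finset.card_lt_card hss
        omega
      · apply hmain w hw hkeep
        intro x hx1 hx2 hx3 k hk l hl hlk hsec'
        by_contra hv
        exact hbad ⟨x, ⟨hx1, hx2, hx3⟩, k, hk, l, hl, hlk, hsec', hv⟩
  -- the base point gives a nonzero class value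
  have hkeep₀ : ∃ k ∈ C, vv (cls (Pst x₀) k) ≠ 0 := by
    have hex : ∃ k₀, g₀ ∈ V k₀ := by
      by_contra hng
      push_neg at hng
      apply hg₀
      rw [hFsum g₀]
      have hempty : Finset.univ.filter (fun k => g₀ ∈ V k) = ∅ :=
        Finset.filter_eq_empty_iff.2 (fun {k} _ => hng k)
      rw [hempty, Finset.sum_empty]
    obtain ⟨k₀, hk₀⟩ := hex
    have hk₀C : k₀ ∈ C := (hCmem k₀).2 ⟨g₀, hk₀, rfl⟩
    refine ⟨k₀, hk₀C, ?_⟩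
    have hseck₀ : sec k₀ x₀ = g₀ := hseceq k₀ g₀ hk₀
    have hclseq₀ : cls (Pst x₀) k₀ = Finset.univ.filter (fun l => g₀ ∈ V l) := by
      ext l
      rw [hclsmem]
      simp only [Finset.mem_filter, Finset.mem_univ, true_and]
      constructor
      · rintro ⟨hlC, hkl⟩
        have h3 := ((hPmem x₀ k₀ l).1 hkl).2.2
        rw [hseck₀] at h3
        rw [h3]
        exact (hsecmem l x₀ ((hCmem l).1 hlC)).1
      · intro hl
        have hlC : l ∈ C := (hCmem l).2 ⟨g₀, hl, rfl⟩
        refine ⟨hlC, (hPmem x₀ k₀ l).2 ⟨hk₀C, hlC, ?_⟩⟩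
        rw [hseck₀, hseceq l g₀ hl]
    have hval : vv (cls (Pst x₀) k₀) = f g₀ := by
      rw [hclseq₀, hFsum g₀]
    rw [hval]
    exact hg₀
  exact hcore (C ×ˢ C).card x₀ hx₀Wb hkeep₀ (by omega)





end Stmt13Aux

/-- Let `G` be a non-Hausdorff étale groupoid.  The intersection of the
singular ideal `J` of `C*_r(G)` with `𝒞_c(G)` is nonzero if and only if `G` satisfies
condition `(𝒮₀)`.  (An element `f ∈ 𝒞_c(G)` lies in `J` precisely when `s(supp°(f))` has
empty interior.) -/
theorem stmt13 [LocallyCompactSpace G] (D : GroupoidData G) [T2Space ↥D.X]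
    (hXopen : IsOpen D.X) (hetale : D.IsEtale) (hnH : ¬ T2Space G) :
    (∃ f : G → ℂ, f ∈ D.CcSpan ∧ f ≠ 0 ∧ interior (D.s '' {g : G | f g ≠ 0}) = ∅) ↔
      D.ConditionS ℚ := by
  constructor
  · rintro ⟨f, hf, hfne, hsing⟩
    exact Stmt13Aux.forward D hXopen hf hfne hsing
  · intro hS
    exact Stmt13Aux.backward D hXopen hS
end
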